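/- arXiv:1608.03392 — 7 statements merged into one kernel-verified Lean document; each statement's English description precedes it below -/
import Mathlib

section
/- Let G be a finite simple graph on n vertices, let 0 < a ≤ b, and set t := b²/a². Suppose C_G(t) ≠ 0. If f is a two-distance representation of G in ℝ^D with distances a and b, then the image of f lies on a sphere of radius a·√(F_G(t)): there exists a point c ∈ ℝ^D with dist(c, f v) = a·√(F_G(t)) for every vertex v of G. -/
open scoped Classical RealInnerProductSpace

noncomputable section

/-- A two-distance representation of a simple graph `G` in `ℝ^d`
(`= EuclideanSpace ℝ (Fin d)`) with distances `a` and `b`, `0 < a ≤ b`: adjacent vertices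
are mapped to points at distance `a`, distinct non-adjacent vertices to points at
distance `b`. -/
def IsTwoDistRep {V : Type*} (G : SimpleGraph V) {d : ℕ}
    (f : V → EuclideanSpace ℝ (Fin d)) (a b : ℝ) : Prop :=
  0 < a ∧ a ≤ b ∧
    (∀ u v, G.Adj u v → dist (f u) (f v) = a) ∧
    (∀ u v, u ≠ v → ¬ G.Adj u v → dist (f u) (f v) = b)

/-- The Euclidean representation number `dim^E_2(G)`: the smallest `d` such that `G` has a
two-distance representation in `ℝ^d`. -/
def dimE2 {V : Type*} (G : SimpleGraph V) : ℕ :=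
  sInf {d | ∃ (f : V → EuclideanSpace ℝ (Fin d)) (a b : ℝ), IsTwoDistRep G f a b}

/-- The spherical representation number `dim^S_2(G)`: the smallest `d` such that `G` has a
two-distance representation in `ℝ^d` whose image lies on a sphere. -/
def dimS2 {V : Type*} (G : SimpleGraph V) : ℕ :=
  sInf {d | ∃ (f : V → EuclideanSpace ℝ (Fin d)) (a b : ℝ)
      (c : EuclideanSpace ℝ (Fin d)) (r : ℝ),
    IsTwoDistRep G f a b ∧ ∀ v, dist c (f v) = r}

/-- The J-spherical representation number `dim^J_2(G)`: the smallest `d` such that `G` has a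
two-distance representation in `ℝ^d` with distances `√2` and `b` (`√2 ≤ b`) whose image lies
on the unit sphere centered at the origin. -/
def dimJ2 {V : Type*} (G : SimpleGraph V) : ℕ :=
  sInf {d | ∃ (f : V → EuclideanSpace ℝ (Fin d)) (b : ℝ),
    IsTwoDistRep G f (Real.sqrt 2) b ∧ ∀ v, ‖f v‖ = 1}

/-- `β_*(G)`: the second distance of the (unique) J-spherical representation of `G` in
dimension `dimJ2 G`. -/
def betaStar {V : Type*} (G : SimpleGraph V) : ℝ :=
  sInf {b : ℝ | ∃ f : V → EuclideanSpace ℝ (Fin (dimJ2 G)),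
    IsTwoDistRep G f (Real.sqrt 2) b ∧ ∀ v, ‖f v‖ = 1}

/-- The Cayley–Menger matrix of a graph, with entries in `ℝ[X]`: the extra index `none`
gives the row and column of `1`s (with `0` in the corner), and for distinct vertices `u, v`
the entry is `1` if they are adjacent and `X` (the variable `t`) otherwise. -/
def cmMatrix {V : Type*} [Fintype V] (G : SimpleGraph V) :
    Matrix (Option V) (Option V) (Polynomial ℝ) := fun i j =>
  match i, j with
  | none, none => 0
  | none, some _ => 1
  | some _, none => 1
  | some u, some v => if u = v then 0 else if G.Adj u v then 1 else Polynomial.X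

/-- The Cayley–Menger polynomial `C_G(t)`. -/
def CG {V : Type*} [Fintype V] (G : SimpleGraph V) : Polynomial ℝ :=
  (cmMatrix G).det

/-- The matrix defining `M_G`. -/
def mMatrix {V : Type*} [Fintype V] (G : SimpleGraph V) :
    Matrix V V (Polynomial ℝ) := fun u v =>
  if u = v then 0 else if G.Adj u v then 1 else Polynomial.X

/-- The polynomial `M_G(t)`. -/
def MG {V : Type*} [Fintype V] (G : SimpleGraph V) : Polynomial ℝ :=
  (mMatrix G).det

/-- `C_G` has a root greater than `1` (i.e. `τ₁(G) < ∞`). -/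
def HasTau {V : Type*} [Fintype V] (G : SimpleGraph V) : Prop :=
  ∃ t : ℝ, 1 < t ∧ (CG G).eval t = 0

/-- `τ₁(G)`: the smallest root of `C_G` greater than `1` (junk value if none exists). -/
def tau1 {V : Type*} [Fintype V] (G : SimpleGraph V) : ℝ :=
  sInf {t : ℝ | 1 < t ∧ (CG G).eval t = 0}

/-- `μ(G)`: the multiplicity of `τ₁(G)` as a root of `C_G`, and `0` if `C_G` has no
root greater than `1`. -/
def muG {V : Type*} [Fintype V] (G : SimpleGraph V) : ℕ :=
  if HasTau G then (CG G).rootMultiplicity (tau1 G) else 0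

/-- `F_G = -M_G / (2 C_G)`, viewed as a rational function of `t`. -/
def FG {V : Type*} [Fintype V] (G : SimpleGraph V) : RatFunc ℝ :=
  RatFunc.mk (-(MG G)) (2 * CG G)

/-- The rational function `F_G` has no pole at `τ₁(G)`: the denominator of the reduced
fraction does not vanish there. -/
def NoPoleAtTau {V : Type*} [Fintype V] (G : SimpleGraph V) : Prop :=
  (FG G).denom.eval (tau1 G) ≠ 0

/-- The value `F_G(τ₁(G))` of the rational function `F_G` at `τ₁(G)`. -/
def FGtau {V : Type*} [Fintype V] (G : SimpleGraph V) : ℝ :=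
  (FG G).eval (RingHom.id ℝ) (tau1 G)

/-- The circumradius `R(G)` is finite: `τ₁(G) < ∞` and `F_G` has no pole at `τ₁(G)`.
(Then `R(G) = √(F_G(τ₁(G)))`.) -/
def RGfin {V : Type*} [Fintype V] (G : SimpleGraph V) : Prop :=
  HasTau G ∧ NoPoleAtTau G

/-- The value of `F_G` at a point `t` which is not a root of `C_G`. -/
def FGval {V : Type*} [Fintype V] (G : SimpleGraph V) (t : ℝ) : ℝ :=
  -((MG G).eval t) / (2 * (CG G).eval t)

/-- `dim^S_2(G, R₀)`: the smallest `d` such that `G` has a two-distance representation in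
`ℝ^d` with distances `1` and `b` whose image lies on a sphere of radius at most `R₀`. -/
def dimS2R {V : Type*} (G : SimpleGraph V) (R₀ : ℝ) : ℕ :=
  sInf {d | ∃ (f : V → EuclideanSpace ℝ (Fin d)) (b : ℝ)
      (c : EuclideanSpace ℝ (Fin d)) (r : ℝ),
    IsTwoDistRep G f 1 b ∧ r ≤ R₀ ∧ ∀ v, dist c (f v) = r}

/-- The join of two graphs: their disjoint union together with all edges between the parts. -/
def graphJoin {V₁ V₂ : Type} (G₁ : SimpleGraph V₁) (G₂ : SimpleGraph V₂) :
    SimpleGraph (V₁ ⊕ V₂) :=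
  SimpleGraph.fromRel fun x y =>
    (∃ a b, x = Sum.inl a ∧ y = Sum.inl b ∧ G₁.Adj a b) ∨
    (∃ a b, x = Sum.inr a ∧ y = Sum.inr b ∧ G₂.Adj a b) ∨
    (∃ a b, x = Sum.inl a ∧ y = Sum.inr b)

/-- The join of a family of graphs: two vertices are adjacent iff they lie in different
summands or are adjacent within their common summand. -/
def familyJoin {ι : Type*} {V : ι → Type*} (G : ∀ i, SimpleGraph (V i)) :
    SimpleGraph (Σ i, V i) :=
  SimpleGraph.fromRel fun x y =>
    x.1 ≠ y.1 ∨ ∃ h : x.1 = y.1, (G y.1).Adj (h ▸ x.2) y.2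

/-- A graph is join-indecomposable if it is not isomorphic to a join of two graphs,
each having at least one vertex. -/
def JoinIndecomposable {V : Type} (G : SimpleGraph V) : Prop :=
  ¬ ∃ (V₁ V₂ : Type) (G₁ : SimpleGraph V₁) (G₂ : SimpleGraph V₂),
      Nonempty V₁ ∧ Nonempty V₂ ∧ Nonempty (G ≃g graphJoin G₁ G₂)

/-- `S` is of Type I in the linear subspace `L`: all points have norm `1`,
`|S| = dim L + 1`, the affine hull of `S` has dimension `dim L`, and the origin lies in the
relative interior of the convex hull of `S`. -/
def TypeI {d : ℕ} (L : Submodule ℝ (EuclideanSpace ℝ (Fin d)))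
    (S : Finset (EuclideanSpace ℝ (Fin d))) : Prop :=
  (↑S : Set (EuclideanSpace ℝ (Fin d))) ⊆ (L : Set (EuclideanSpace ℝ (Fin d))) ∧
  (∀ p ∈ S, ‖p‖ = 1) ∧
  S.card = Module.finrank ℝ L + 1 ∧
  Module.finrank ℝ (affineSpan ℝ (↑S : Set (EuclideanSpace ℝ (Fin d)))).direction =
    Module.finrank ℝ L ∧
  (0 : EuclideanSpace ℝ (Fin d)) ∈
    intrinsicInterior ℝ (convexHull ℝ (↑S : Set (EuclideanSpace ℝ (Fin d))))

/-- `S` is of Type II in the linear subspace `L`: all points have norm `1`,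
`|S| = dim L`, the affine hull of `S` has dimension `dim L - 1`, and the origin does not lie
in the affine hull of `S`. -/
def TypeII {d : ℕ} (L : Submodule ℝ (EuclideanSpace ℝ (Fin d)))
    (S : Finset (EuclideanSpace ℝ (Fin d))) : Prop :=
  (↑S : Set (EuclideanSpace ℝ (Fin d))) ⊆ (L : Set (EuclideanSpace ℝ (Fin d))) ∧
  (∀ p ∈ S, ‖p‖ = 1) ∧
  S.card = Module.finrank ℝ L ∧
  Module.finrank ℝ (affineSpan ℝ (↑S : Set (EuclideanSpace ℝ (Fin d)))).direction =
    Module.finrank ℝ L - 1 ∧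
  (0 : EuclideanSpace ℝ (Fin d)) ∉ affineSpan ℝ (↑S : Set (EuclideanSpace ℝ (Fin d)))

/-- A J-spherical two-distance (JSTD) set with second distance `b`: a finite set on the unit
sphere centered at the origin whose pairwise distances take exactly the two values `√2` and
`b`, where `b > √2`. -/
def IsJSTD {d : ℕ} (S : Finset (EuclideanSpace ℝ (Fin d))) (b : ℝ) : Prop :=
  (∀ p ∈ S, ‖p‖ = 1) ∧ Real.sqrt 2 < b ∧
  (∀ p ∈ S, ∀ q ∈ S, p ≠ q → dist p q = Real.sqrt 2 ∨ dist p q = b) ∧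
  (∃ p ∈ S, ∃ q ∈ S, dist p q = Real.sqrt 2) ∧
  (∃ p ∈ S, ∃ q ∈ S, dist p q = b)

lemma det_irrel {m : Type*} [Fintype m] {R : Type*} [CommRing R]
    (i1 i2 : DecidableEq m) (M : Matrix m m R) :
    @Matrix.det m i1 _ R _ M = @Matrix.det m i2 _ R _ M := by
  have : i1 = i2 := Subsingleton.elim _ _
  rw [this]

/-- If `C_G(b²/a²) ≠ 0`, then the image of any two-distance representation
of `G` with distances `a` and `b` lies on a sphere of radius `a·√(F_G(b²/a²))`. -/
theorem rep_lies_on_sphere (n : ℕ) (G : SimpleGraph (Fin n)) (D : ℕ) (a b : ℝ)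
    (hC : (CG G).eval (b ^ 2 / a ^ 2) ≠ 0)
    (f : Fin n → EuclideanSpace ℝ (Fin D)) (hf : IsTwoDistRep G f a b) :
    ∃ c : EuclideanSpace ℝ (Fin D),
      ∀ v, dist c (f v) = a * Real.sqrt (FGval G (b ^ 2 / a ^ 2)) := by
  obtain ⟨ha, hab, hadj, hnadj⟩ := hf
  set t : ℝ := b ^ 2 / a ^ 2 with ht
  -- real matrices
  set A : Matrix (Option (Fin n)) (Option (Fin n)) ℝ :=
    (Polynomial.evalRingHom t).mapMatrix (cmMatrix G) with hAdef
  have hAdet : A.det = (CG G).eval t := by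
    rw [hAdef, ← RingHom.map_det, Polynomial.coe_evalRingHom]
    refine congrArg (Polynomial.eval t) ?_
    unfold CG
    exact det_irrel _ _ _
  have hAdet0 : A.det ≠ 0 := by rw [hAdet]; exact hC
  have hAu : IsUnit A.det := isUnit_iff_ne_zero.mpr hAdet0
  -- entries of A
  set qr : Fin n → Fin n → ℝ := fun i j =>
    if i = j then 0 else if G.Adj i j then 1 else t with hqr
  have hAnone : ∀ j : Fin n, A none (some j) = 1 := by
    intro j; simp [hAdef, cmMatrix]
  have hAnone' : ∀ j : Fin n, A (some j) none = 1 := by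
    intro j; simp [hAdef, cmMatrix]
  have hA00 : A none none = 0 := by simp [hAdef, cmMatrix]
  have hAsome : ∀ i j : Fin n, A (some i) (some j) = qr i j := by
    intro i j
    simp only [hAdef, RingHom.mapMatrix_apply, Matrix.map_apply, cmMatrix, hqr]
    split_ifs <;> simp
  have hqsymm : ∀ i j, qr i j = qr j i := by
    intro i j
    simp only [hqr]
    by_cases h : i = j
    · subst h; simp
    · rw [if_neg h, if_neg (Ne.symm h), G.adj_comm]
  -- solution vector
  set x : Option (Fin n) → ℝ := A⁻¹.mulVec (Pi.single none 1) with hx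
  have hAx : A.mulVec x = Pi.single none 1 := by
    rw [hx, Matrix.mulVec_mulVec, Matrix.mul_nonsing_inv A hAu, Matrix.one_mulVec]
  set lam : Fin n → ℝ := fun i => x (some i) with hlam
  set α : ℝ := x none with halpha
  -- row equations
  have hsum1 : ∑ i, lam i = 1 := by
    have h0 := congrFun hAx none
    simp only [Matrix.mulVec, dotProduct, Fintype.sum_option, hA00, hAnone,
      Pi.single_eq_same, zero_mul, one_mul, zero_add] at h0
    exact h0
  have hS : ∀ i, ∑ k, qr i k * lam k = -α := by
    intro i
    have h0 := congrFun hAx (some i)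
    simp only [Matrix.mulVec, dotProduct, Fintype.sum_option, hAnone', hAsome,
      one_mul] at h0
    rw [Pi.single_eq_of_ne (by simp : (some i : Option (Fin n)) ≠ none)] at h0
    linarith [h0]
  -- value of α via adjugate
  have hMdet : ((Polynomial.evalRingHom t).mapMatrix (mMatrix G)).det = (MG G).eval t := by
    rw [← RingHom.map_det, Polynomial.coe_evalRingHom]
    refine congrArg (Polynomial.eval t) ?_
    unfold MG
    exact det_irrel _ _ _
  have hadj00 : A.adjugate none none = (MG G).eval t := by
    rw [Matrix.adjugate_apply, ← hMdet]
    -- reindex to block form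
    let e : PUnit.{1} ⊕ Fin n ≃ Option (Fin n) :=
      ⟨Sum.elim (fun _ => none) some, fun o => o.elim (Sum.inl PUnit.unit) Sum.inr,
        by rintro (⟨⟩ | i) <;> rfl, by rintro (_ | i) <;> rfl⟩
    rw [← Matrix.det_submatrix_equiv_self e]
    have hblock : (A.updateRow none (Pi.single none 1)).submatrix e e =
        Matrix.fromBlocks 1 0 (Matrix.of fun (_ : Fin n) (_ : PUnit) => (1:ℝ))
          ((Polynomial.evalRingHom t).mapMatrix (mMatrix G)) := by
      ext i j
      rcases i with i | i <;> rcases j with j | j <;>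
        simp [Matrix.submatrix_apply, e, Matrix.updateRow_apply, Pi.single_apply,
          Matrix.fromBlocks, Matrix.one_apply, hAdef, cmMatrix, mMatrix]
    rw [hblock, Matrix.det_fromBlocks_zero₁₂]
    simp
  have hα : α = (MG G).eval t / (CG G).eval t := by
    rw [halpha, hx, Matrix.inv_def, Ring.inverse_eq_inv']
    simp only [Matrix.smul_mulVec, Pi.smul_apply, smul_eq_mul]
    rw [Matrix.mulVec, dotProduct]
    rw [Fintype.sum_option]
    simp [hadj00, hAdet, div_eq_inv_mul]
  -- squared distances
  have hd : ∀ i j, ‖f i - f j‖ ^ 2 = a ^ 2 * qr i j := by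
    intro i j
    by_cases h : i = j
    · subst h; simp [hqr]
    · by_cases hadj' : G.Adj i j
      · have := hadj i j hadj'
        rw [dist_eq_norm] at this
        rw [this, hqr]; simp [h, hadj']
      · have := hnadj i j h hadj'
        rw [dist_eq_norm] at this
        rw [this]
        simp only [hqr]
        rw [if_neg h, if_neg hadj', ht]
        field_simp
  -- the center
  refine ⟨∑ i, lam i • f i, fun v => ?_⟩
  set c : EuclideanSpace ℝ (Fin D) := ∑ i, lam i • f i with hc
  have hcv : c - f v = ∑ i, lam i • (f i - f v) := by
    simp only [smul_sub, Finset.sum_sub_distrib, ← Finset.sum_smul, hsum1, one_smul, hc]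
  have hinner : ∀ i k : Fin n, ⟪f i - f v, f k - f v⟫ =
      a ^ 2 * (qr i v + qr k v - qr i k) / 2 := by
    intro i k
    have h1 := norm_sub_sq_real (f i - f v) (f k - f v)
    have h2 : (f i - f v) - (f k - f v) = f i - f k := by abel
    rw [h2, hd i k, hd i v, hd k v] at h1
    linarith
  have hnormsq : ‖c - f v‖ ^ 2 = a ^ 2 * (-α) / 2 := by
    rw [← real_inner_self_eq_norm_sq, hcv, sum_inner]
    simp_rw [inner_sum, real_inner_smul_left, real_inner_smul_right, hinner]
    have hrow : ∀ i, ∑ k, lam i * (lam k * (a ^ 2 * (qr i v + qr k v - qr i k) / 2)) =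
        lam i * (a ^ 2 * qr i v / 2) := by
      intro i
      have e1 : ∑ k, lam k * qr k v = -α := by
        rw [← hS v]; apply Finset.sum_congr rfl; intro k _; rw [hqsymm k v]; ring
      have e2 : ∑ k, lam k * qr i k = -α := by
        rw [← hS i]; apply Finset.sum_congr rfl; intro k _; ring
      have expand : ∀ k, lam i * (lam k * (a ^ 2 * (qr i v + qr k v - qr i k) / 2)) =
          lam i * (a^2/2) * (qr i v * lam k + lam k * qr k v - lam k * qr i k) := by
        intro k; ring
      rw [Finset.sum_congr rfl (fun k _ => expand k)]
      rw [← Finset.mul_sum]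
      simp only [Finset.sum_sub_distrib, Finset.sum_add_distrib, ← Finset.mul_sum, e1, e2,
        hsum1]
      ring
    rw [Finset.sum_congr rfl (fun i _ => hrow i)]
    have e3 : ∑ i, lam i * qr i v = -α := by
      rw [← hS v]; apply Finset.sum_congr rfl; intro k _; rw [hqsymm k v]; ring
    have : ∑ i, lam i * (a ^ 2 * qr i v / 2) = (a^2/2) * ∑ i, lam i * qr i v := by
      rw [Finset.mul_sum]; apply Finset.sum_congr rfl; intro k _; ring
    rw [this, e3]; ring
  have hFval : FGval G t = -α / 2 := by
    rw [FGval, hα, neg_div, neg_div, div_div, mul_comm ((CG G).eval t) 2]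
  have hnormsq' : ‖c - f v‖ ^ 2 = a ^ 2 * FGval G t := by
    rw [hnormsq, hFval]; ring
  have hF0 : 0 ≤ FGval G t := by
    nlinarith [sq_nonneg ‖c - f v‖, sq_nonneg a, mul_pos ha ha]
  rw [dist_eq_norm]
  have : ‖c - f v‖ = Real.sqrt (a ^ 2 * FGval G t) := by
    rw [← hnormsq', Real.sqrt_sq (norm_nonneg _)]
  rw [this, Real.sqrt_mul (sq_nonneg a), Real.sqrt_sq ha.le]
end
end

section
/- Let S be a finite set of points in ℝ^d with |S| ≥ d + 1 such that the distance between any two distinct points of S is at least √2. If S is contained in a sphere of radius R ≤ 1 centered at a point c (that is, dist(c, p) = R for all p ∈ S), then c lies in the convex hull of S. -/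
open scoped Classical RealInnerProductSpace

noncomputable section

/-!
If `c` were outside the convex hull of `S`, a linear functional `f` would separate them, so
`f (p - c) > 0` for every `p ∈ S`. The vectors `p - c` have norm at most `1` and pairwise
distances at least `√2`, hence pairwise non-positive inner products. A family of pairwise
obtuse vectors lying in an open half-space is linearly independent, so `S` has at most `d`
points.
-/

open Finset

lemma exists_forall_lt_of_notMem_convexHull {E : Type*} [TopologicalSpace E] [AddCommGroup E]
    [Module ℝ E] [IsTopologicalAddGroup E] [ContinuousSMul ℝ E] [LocallyConvexSpace ℝ E]
    [T2Space E] {s : Set E} (hs : s.Finite) {x : E} (hx : x ∉ convexHull ℝ s) :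
    ∃ f : E →L[ℝ] ℝ, ∀ p ∈ s, f x < f p := by
  obtain ⟨f, u, hxu, hus⟩ := geometric_hahn_banach_point_closed (convex_convexHull ℝ s)
    (hs.isCompact_convexHull ℝ).isClosed hx
  exact ⟨f, fun p hp => hxu.trans (hus p (subset_convexHull ℝ s hp))⟩

lemma eq_zero_of_sum_smul_eq_zero_of_nonneg {M ι : Type*} [AddCommGroup M] [Module ℝ M]
    (f : M →ₗ[ℝ] ℝ) {v : ι → M} (hf : ∀ i, 0 < f (v i)) {s : Finset ι} {a : ι → ℝ}
    (ha : ∀ i ∈ s, 0 ≤ a i) (hsum : ∑ i ∈ s, a i • v i = 0) : ∀ i ∈ s, a i = 0 := by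
  have hterms : ∀ i ∈ s, a i * f (v i) = 0 := by
    rw [← sum_eq_zero_iff_of_nonneg fun i hi => mul_nonneg (ha i hi) (hf i).le]
    simpa using congrArg f hsum
  exact fun i hi => (mul_eq_zero.mp (hterms i hi)).resolve_right (hf i).ne'

section InnerProductSpace

variable {E : Type*} [NormedAddCommGroup E] [InnerProductSpace ℝ E]

lemma sum_smul_eq_zero_of_pairwise_inner_nonpos {ι : Type*} {v : ι → E}
    (hv : Pairwise fun i j => ⟪v i, v j⟫ ≤ 0) {s : Finset ι} {a b : ι → ℝ}
    (ha : ∀ i ∈ s, 0 ≤ a i) (hb : ∀ i ∈ s, 0 ≤ b i) (hab : ∀ i ∈ s, a i * b i = 0)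
    (heq : ∑ i ∈ s, a i • v i = ∑ i ∈ s, b i • v i) : ∑ i ∈ s, a i • v i = 0 := by
  have hinner : ⟪∑ i ∈ s, a i • v i, ∑ i ∈ s, b i • v i⟫ ≤ 0 := by
    simp_rw [sum_inner, inner_sum, real_inner_smul_left, real_inner_smul_right]
    refine sum_nonpos fun i hi => sum_nonpos fun j hj => ?_
    rcases eq_or_ne i j with rfl | hij
    · rw [← mul_assoc, hab i hi, zero_mul]
    · exact mul_nonpos_of_nonneg_of_nonpos (ha i hi)
        (mul_nonpos_of_nonneg_of_nonpos (hb j hj) (hv hij))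
  rw [← heq] at hinner
  exact real_inner_self_nonpos.mp hinner

theorem linearIndependent_of_pairwise_inner_nonpos {ι : Type*} (f : E →ₗ[ℝ] ℝ) {v : ι → E}
    (hf : ∀ i, 0 < f (v i)) (hv : Pairwise fun i j => ⟪v i, v j⟫ ≤ 0) :
    LinearIndependent ℝ v := by
  rw [linearIndependent_iff']
  intro s g hg i hi
  have hsplit : ∑ i ∈ s, (g i)⁺ • v i = ∑ i ∈ s, (g i)⁻ • v i := by
    rw [← sub_eq_zero, ← sum_sub_distrib]
    simpa only [← sub_smul, posPart_sub_negPart] using hg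
  have hpos_mul_neg : ∀ i ∈ s, (g i)⁺ * (g i)⁻ = 0 := fun i _ => by
    rcases le_total 0 (g i) with h | h
    · rw [negPart_eq_zero.mpr h, mul_zero]
    · rw [posPart_eq_zero.mpr h, zero_mul]
  have hpos := sum_smul_eq_zero_of_pairwise_inner_nonpos hv (fun i _ => posPart_nonneg _)
    (fun i _ => negPart_nonneg _) hpos_mul_neg hsplit
  have hneg : ∑ i ∈ s, (g i)⁻ • v i = 0 := hsplit ▸ hpos
  rw [← posPart_sub_negPart (g i),
    eq_zero_of_sum_smul_eq_zero_of_nonneg f hf (fun i _ => posPart_nonneg _) hpos i hi,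
    eq_zero_of_sum_smul_eq_zero_of_nonneg f hf (fun i _ => negPart_nonneg _) hneg i hi, sub_zero]

lemma inner_nonpos_of_sqrt_two_le_dist {x y : E} (hx : ‖x‖ ≤ 1) (hy : ‖y‖ ≤ 1)
    (hxy : √2 ≤ dist x y) : ⟪x, y⟫ ≤ 0 := by
  have h2 : 2 ≤ ‖x - y‖ ^ 2 := by
    rw [← dist_eq_norm]
    calc (2 : ℝ) = √2 ^ 2 := by simp
      _ ≤ dist x y ^ 2 := by gcongr
  rw [norm_sub_sq_real] at h2
  nlinarith [norm_nonneg x, norm_nonneg y]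

theorem card_le_finrank_of_notMem_convexHull [FiniteDimensional ℝ E] {S : Finset E} {c : E}
    (hS : ∀ p ∈ S, dist p c ≤ 1) (hdist : ∀ p ∈ S, ∀ q ∈ S, p ≠ q → √2 ≤ dist p q)
    (hc : c ∉ convexHull ℝ (S : Set E)) : S.card ≤ Module.finrank ℝ E := by
  obtain ⟨f, hf⟩ := exists_forall_lt_of_notMem_convexHull S.finite_toSet hc
  have hli : LinearIndependent ℝ fun p : S => (p : E) - c := by
    refine linearIndependent_of_pairwise_inner_nonpos f.toLinearMap
      (fun p => by simpa using hf p p.2) fun p q hpq => ?_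
    refine inner_nonpos_of_sqrt_two_le_dist ?_ ?_ ?_
    · simpa [dist_eq_norm] using hS p p.2
    · simpa [dist_eq_norm] using hS q q.2
    · simpa [dist_sub_right] using hdist p p.2 q q.2 (Subtype.coe_ne_coe.mpr hpq)
  simpa using hli.fintype_card_le_finrank

end InnerProductSpace

/-- If `S ⊆ ℝ^d` has at least `d + 1` points with pairwise distances at
least `√2` and lies on a sphere of radius `R ≤ 1` centered at `c`, then `c` lies in the
convex hull of `S`. -/
theorem center_mem_convexHull (d : ℕ) (S : Finset (EuclideanSpace ℝ (Fin d)))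
    (hcard : d + 1 ≤ S.card)
    (hdist : ∀ p ∈ S, ∀ q ∈ S, p ≠ q → Real.sqrt 2 ≤ dist p q)
    (c : EuclideanSpace ℝ (Fin d)) (R : ℝ) (hR : R ≤ 1)
    (hS : ∀ p ∈ S, dist c p = R) :
    c ∈ convexHull ℝ (↑S : Set (EuclideanSpace ℝ (Fin d))) := by
  by_contra hc
  have hle := card_le_finrank_of_notMem_convexHull
    (fun p hp => (dist_comm p c).trans_le ((hS p hp).trans_le hR)) hdist hc
  rw [finrank_euclideanSpace_fin] at hle
  omega
end
end

section
/- Let G be a finite simple graph on n vertices and let y₁ < y₂ be reals with √2 ≤ y₁ and C_G(s) ≠ 0 for all s in the interval (1, y₂²/2]. Let f₁ be a two-distance representation of G in ℝ^{n−1} with distances √2 and y₁, and let f₂ be a two-distance representation of G in ℝ^{n−1} with distances √2 and y₂. If the image of f₂ is contained in a closed ball of radius r, then the image of f₁ is contained in some closed ball of radius r. (In other words, the minimum enclosing ball radius Φ_G(y) of the representation with second distance y is a nondecreasing function of y.) -/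
open scoped Classical RealInnerProductSpace

noncomputable section

/-! Both representations agree on edges and `y₁ < y₂`, so `f₁` is vertexwise a contraction of
`f₂`, and the theorem is the one-point case of Kirszbraun's theorem: if
`dist (y i) (y j) ≤ dist (x i) (x j)` for all `i, j`, then for every `c` there is `c'` with
`dist c' (y i) ≤ dist c (x i)` for all `i`.

For the latter put `r i = dist c (x i)` and let `z₀` minimize `max_i (dist z (y i) ^ 2 - r i ^ 2)`,
with minimum `μ`. If `μ > 0` then `z₀` is a convex combination `∑ w_k y_k` of the points where the
maximum is attained, since otherwise moving `z₀` towards them would lower the maximum. By the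
identity `∑_{k,l} w_k w_l ‖u_k - u_l‖² = 2 ∑_k w_k ‖u_k‖² - 2 ‖∑_k w_k u_k‖²` (for `∑ w_k = 1`),
`2 (μ + ∑ w_k r_k²) = ∑ w_k w_l ‖y_k - y_l‖² ≤ ∑ w_k w_l ‖x_k - x_l‖² ≤ 2 ∑ w_k r_k²`,
a contradiction. -/

open Filter Topology Finset

section Kirszbraun

variable {E F : Type*} [NormedAddCommGroup E] [InnerProductSpace ℝ E]
  [NormedAddCommGroup F] [InnerProductSpace ℝ F]

theorem sum_sum_mul_mul_norm_sub_sq {κ : Type*} [Fintype κ] (w : κ → ℝ) (u : κ → E) :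
    ∑ k, ∑ l, w k * w l * ‖u k - u l‖ ^ 2 =
      2 * (∑ k, w k) * ∑ k, w k * ‖u k‖ ^ 2 - 2 * ‖∑ k, w k • u k‖ ^ 2 := by
  have hnorm : ‖∑ k, w k • u k‖ ^ 2 = ∑ k, ∑ l, w k * w l * ⟪u k, u l⟫ := by
    rw [← real_inner_self_eq_norm_sq, sum_inner]
    refine sum_congr rfl fun k _ => ?_
    simp only [inner_sum, real_inner_smul_left, real_inner_smul_right]
    exact sum_congr rfl fun l _ => by ring
  calc ∑ k, ∑ l, w k * w l * ‖u k - u l‖ ^ 2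
      = ∑ k, ∑ l, (w k * ‖u k‖ ^ 2 * w l + w k * (w l * ‖u l‖ ^ 2)
          - 2 * (w k * w l * ⟪u k, u l⟫)) := by
        refine sum_congr rfl fun k _ => sum_congr rfl fun l _ => ?_
        rw [norm_sub_sq_real]
        ring
    _ = 2 * (∑ k, w k) * ∑ k, w k * ‖u k‖ ^ 2 - 2 * ‖∑ k, w k • u k‖ ^ 2 := by
        simp only [sum_sub_distrib, sum_add_distrib, ← sum_mul, ← mul_sum, hnorm]
        ring

theorem sum_mul_dist_centerMass_sq_le {κ : Type*} [Fintype κ] {w : κ → ℝ}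
    (hw₀ : ∀ k, 0 ≤ w k) (hw₁ : ∑ k, w k = 1) (x : κ → E) (y : κ → F)
    (hxy : ∀ k l, dist (y k) (y l) ≤ dist (x k) (x l)) (c : E) :
    ∑ k, w k * dist (∑ l, w l • y l) (y k) ^ 2 ≤ ∑ k, w k * dist c (x k) ^ 2 := by
  set z := ∑ l, w l • y l
  have hbar : ∑ k, w k • (y k - z) = 0 := by
    simp only [smul_sub, sum_sub_distrib, ← sum_smul, hw₁, one_smul, z, sub_self]
  have hy := sum_sum_mul_mul_norm_sub_sq w (fun k => y k - z)
  have hx := sum_sum_mul_mul_norm_sub_sq w (fun k => x k - c)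
  simp only [sub_sub_sub_cancel_right, hbar, hw₁, norm_zero] at hy hx
  have hcontr : ∑ k, ∑ l, w k * w l * ‖y k - y l‖ ^ 2 ≤
      ∑ k, ∑ l, w k * w l * ‖x k - x l‖ ^ 2 := by
    gcongr with k _ l _
    · exact mul_nonneg (hw₀ k) (hw₀ l)
    · simpa only [← dist_eq_norm] using hxy k l
  simp only [dist_comm _ (y _), dist_comm c, dist_eq_norm]
  nlinarith [sq_nonneg ‖∑ k, w k • (x k - c)‖]

theorem exists_forall_inner_sub_pos_of_notMem {K : Set F} (hK : IsComplete K)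
    (hconv : Convex ℝ K) {z : F} (hz : z ∉ K) : ∃ w : F, ∀ q ∈ K, 0 < ⟪w, q - z⟫ := by
  rcases K.eq_empty_or_nonempty with rfl | hne
  · exact ⟨0, fun q hq => hq.elim⟩
  obtain ⟨p, hpK, hp⟩ := exists_norm_eq_iInf_of_complete_convex hne hK hconv z
  have hobtuse := (norm_eq_iInf_iff_real_inner_le_zero hconv hpK).1 hp
  have hpz : p - z ≠ 0 := sub_ne_zero.2 fun h => hz (h ▸ hpK)
  refine ⟨p - z, fun q hq => ?_⟩
  have hsplit : ⟪p - z, q - z⟫ = -⟪z - p, q - p⟫ + ‖p - z‖ ^ 2 := by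
    rw [← real_inner_self_eq_norm_sq, ← inner_neg_left, neg_sub, ← inner_add_right]
    congr 1
    abel
  rw [hsplit]
  linarith [hobtuse q hq, pow_pos (norm_pos_iff.2 hpz) 2]

theorem dist_add_smul_sq (z w y : F) (ε : ℝ) :
    dist (z + ε • w) y ^ 2 = dist z y ^ 2 - ε * (2 * ⟪w, y - z⟫ - ε * ‖w‖ ^ 2) := by
  have hinner : ⟪z - y, w⟫ = -⟪w, y - z⟫ := by
    rw [real_inner_comm, ← inner_neg_right, neg_sub]
  rw [dist_eq_norm, dist_eq_norm, show z + ε • w - y = (z - y) + ε • w by abel,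
    norm_add_sq_real, real_inner_smul_right, norm_smul, Real.norm_eq_abs, mul_pow, sq_abs,
    hinner]
  ring

theorem mem_convexHull_of_minimizes_max_dist_sq_sub {ι : Type*} [Finite ι] (y : ι → F)
    (r : ι → ℝ) {z₀ : F} {μ : ℝ} (hle : ∀ i, dist z₀ (y i) ^ 2 - r i ≤ μ)
    (hmin : ∀ z, ∃ i, μ ≤ dist z (y i) ^ 2 - r i) :
    z₀ ∈ convexHull ℝ (y '' {i | dist z₀ (y i) ^ 2 - r i = μ}) := by
  by_contra hz
  have hcompact := ((Set.toFinite {i | dist z₀ (y i) ^ 2 - r i = μ}).image y).isCompact_convexHull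
    (𝕜 := ℝ)
  obtain ⟨w, hw⟩ :=
    exists_forall_inner_sub_pos_of_notMem hcompact.isComplete (convex_convexHull ℝ _) hz
  have hdescent : ∀ i, ∀ᶠ ε in 𝓝[>] (0 : ℝ), dist (z₀ + ε • w) (y i) ^ 2 - r i < μ := by
    intro i
    by_cases hi : dist z₀ (y i) ^ 2 - r i = μ
    · have hpos : 0 < 2 * ⟪w, y i - z₀⟫ - 0 * ‖w‖ ^ 2 := by
        linarith [hw (y i) (subset_convexHull ℝ _ ⟨i, hi, rfl⟩)]
      have hslope : ∀ᶠ ε in 𝓝[>] (0 : ℝ), 0 < 2 * ⟪w, y i - z₀⟫ - ε * ‖w‖ ^ 2 :=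
        nhdsWithin_le_nhds <| (Continuous.tendsto (by fun_prop) 0).eventually_const_lt hpos
      filter_upwards [self_mem_nhdsWithin, hslope] with ε hε hε'
      rw [dist_add_smul_sq, ← hi]
      linarith [mul_pos (Set.mem_Ioi.1 hε) hε']
    · have hcont : Continuous fun ε : ℝ => dist (z₀ + ε • w) (y i) ^ 2 - r i := by fun_prop
      have hlt : dist (z₀ + (0 : ℝ) • w) (y i) ^ 2 - r i < μ := by
        simpa only [zero_smul, add_zero] using lt_of_le_of_ne (hle i) hi
      exact nhdsWithin_le_nhds <| (hcont.tendsto 0).eventually_lt_const hlt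
  obtain ⟨ε, hε⟩ := (eventually_all.2 hdescent).exists
  obtain ⟨i, hi⟩ := hmin (z₀ + ε • w)
  exact (hε i).not_ge hi

theorem exists_forall_dist_le_of_dist_le [FiniteDimensional ℝ F] {ι : Type*} [Fintype ι]
    (x : ι → E) (y : ι → F) (hxy : ∀ i j, dist (y i) (y j) ≤ dist (x i) (x j)) (c : E) :
    ∃ c' : F, ∀ i, dist c' (y i) ≤ dist c (x i) := by
  rcases isEmpty_or_nonempty ι with hι | hι
  · exact ⟨0, isEmptyElim⟩
  set g : F → ℝ := fun z => univ.sup' univ_nonempty fun i => dist z (y i) ^ 2 - dist c (x i) ^ 2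
  have hle : ∀ z i, dist z (y i) ^ 2 - dist c (x i) ^ 2 ≤ g z := fun z i =>
    le_sup' (fun i => dist z (y i) ^ 2 - dist c (x i) ^ 2) (mem_univ i)
  obtain ⟨z₀, hz₀⟩ : ∃ z₀, ∀ z, g z₀ ≤ g z := by
    refine (Continuous.finset_sup'_apply _ fun i _ => by fun_prop).exists_forall_le ?_
    obtain ⟨i⟩ := hι
    exact tendsto_atTop_mono (hle · i) <| tendsto_atTop_add_const_right _ _ <|
      (tendsto_pow_atTop two_ne_zero).comp (tendsto_dist_right_cocompact_atTop (y i))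
  have hmin : ∀ z, ∃ i, g z₀ ≤ dist z (y i) ^ 2 - dist c (x i) ^ 2 := fun z => by
    obtain ⟨i, -, hi⟩ :=
      exists_mem_eq_sup' univ_nonempty fun i => dist z (y i) ^ 2 - dist c (x i) ^ 2
    exact ⟨i, hi ▸ hz₀ z⟩
  suffices hμ : g z₀ ≤ 0 from ⟨z₀, fun i =>
    (pow_le_pow_iff_left₀ dist_nonneg dist_nonneg two_ne_zero).1 (by linarith [hle z₀ i])⟩
  obtain ⟨κ, _, w, z, hw₀, hw₁, hz, hbar⟩ := mem_convexHull_iff_exists_fintype.1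
    (mem_convexHull_of_minimizes_max_dist_sq_sub y _ (hle z₀) hmin)
  choose σ hσ hyσ using hz
  have hbar' : ∑ k, w k • y (σ k) = z₀ := by simp only [hyσ, hbar]
  have hactive : ∀ k, dist z₀ (y (σ k)) ^ 2 = g z₀ + dist c (x (σ k)) ^ 2 := fun k => by
    linarith [(hσ k).out]
  have hvar := sum_mul_dist_centerMass_sq_le hw₀ hw₁ (x ∘ σ) (y ∘ σ) (fun k l => hxy _ _) c
  simp only [Function.comp_apply, hbar', hactive, mul_add, sum_add_distrib, ← sum_mul, hw₁]
    at hvar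
  linarith

end Kirszbraun

theorem IsTwoDistRep.dist_le_dist {V : Type*} {G : SimpleGraph V} {d₁ d₂ : ℕ}
    {f₁ : V → EuclideanSpace ℝ (Fin d₁)} {f₂ : V → EuclideanSpace ℝ (Fin d₂)} {a b₁ b₂ : ℝ}
    (hf₁ : IsTwoDistRep G f₁ a b₁) (hf₂ : IsTwoDistRep G f₂ a b₂) (hb : b₁ ≤ b₂) (u v : V) :
    dist (f₁ u) (f₁ v) ≤ dist (f₂ u) (f₂ v) := by
  obtain ⟨-, -, hadj₁, hnonadj₁⟩ := hf₁
  obtain ⟨-, -, hadj₂, hnonadj₂⟩ := hf₂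
  rcases eq_or_ne u v with rfl | huv
  · simp
  by_cases hadj : G.Adj u v
  · rw [hadj₁ u v hadj, hadj₂ u v hadj]
  · rw [hnonadj₁ u v huv hadj, hnonadj₂ u v huv hadj]
    exact hb

theorem enclosing_radius_mono_general (n : ℕ) (G : SimpleGraph (Fin n)) (y₁ y₂ : ℝ)
    (hy : y₁ < y₂)
    (f₁ f₂ : Fin n → EuclideanSpace ℝ (Fin (n - 1)))
    (hf₁ : IsTwoDistRep G f₁ (Real.sqrt 2) y₁)
    (hf₂ : IsTwoDistRep G f₂ (Real.sqrt 2) y₂)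
    (c : EuclideanSpace ℝ (Fin (n - 1))) (r : ℝ)
    (h : ∀ v, f₂ v ∈ Metric.closedBall c r) :
    ∃ c' : EuclideanSpace ℝ (Fin (n - 1)), ∀ v, f₁ v ∈ Metric.closedBall c' r := by
  obtain ⟨c', hc'⟩ :=
    exists_forall_dist_le_of_dist_le f₂ f₁ (hf₁.dist_le_dist hf₂ hy.le) c
  exact ⟨c', fun v => Metric.mem_closedBall'.2 <| (hc' v).trans (Metric.mem_closedBall'.1 (h v))⟩

/-- The minimum enclosing ball radius of the representation with second
distance `y` is nondecreasing in `y`. -/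
theorem enclosing_radius_mono (n : ℕ) (G : SimpleGraph (Fin n)) (y₁ y₂ : ℝ)
    (hy₁ : Real.sqrt 2 ≤ y₁) (hy : y₁ < y₂)
    (hC : ∀ s : ℝ, 1 < s → s ≤ y₂ ^ 2 / 2 → (CG G).eval s ≠ 0)
    (f₁ f₂ : Fin n → EuclideanSpace ℝ (Fin (n - 1)))
    (hf₁ : IsTwoDistRep G f₁ (Real.sqrt 2) y₁)
    (hf₂ : IsTwoDistRep G f₂ (Real.sqrt 2) y₂)
    (c : EuclideanSpace ℝ (Fin (n - 1))) (r : ℝ)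
    (h : ∀ v, f₂ v ∈ Metric.closedBall c r) :
    ∃ c' : EuclideanSpace ℝ (Fin (n - 1)), ∀ v, f₁ v ∈ Metric.closedBall c' r :=
  enclosing_radius_mono_general n G y₁ y₂ hy f₁ f₂ hf₁ hf₂ c r h
end
end

section
/- Let G be a finite simple graph on n vertices and let x > √2 be a real such that C_G(s) ≠ 0 for all s in the interval (1, x²/2]. Then the image of any two-distance representation of G in ℝ^{n−1} with distances √2 and x affinely spans ℝ^{n−1}; that is, the affine hull of the image is all of ℝ^{n−1} (the image is the vertex set of an (n−1)-dimensional simplex). -/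
open scoped Classical RealInnerProductSpace

noncomputable section

/-- Evaluation of the Cayley–Menger polynomial is the determinant of the evaluated matrix. -/
lemma CG_eval_eq_det {V : Type*} [Fintype V] (G : SimpleGraph V) (t : ℝ) :
    (CG G).eval t = ((cmMatrix G).map (Polynomial.eval t)).det := by
  have := (Polynomial.evalRingHom t).map_det (cmMatrix G)
  simpa [CG] using this

/-- If the evaluated Cayley–Menger determinant is nonzero and the squared pairwise
distances of a family of points match twice the corresponding matrix entries, then the
family is affinely independent. -/
lemma affineIndep_of_cm_det_ne_zero (n : ℕ) (G : SimpleGraph (Fin n)) (t : ℝ)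
    (hdet : (CG G).eval t ≠ 0) {d : ℕ} (f : Fin n → EuclideanSpace ℝ (Fin d))
    (hq : ∀ u v : Fin n, dist (f u) (f v) ^ 2 =
      2 * Polynomial.eval t (cmMatrix G (some u) (some v))) :
    AffineIndependent ℝ f := by
  classical
  rw [affineIndependent_iff]
  by_contra h
  push_neg at h
  obtain ⟨s, w, hw0, hws, e, he, hwe⟩ := h
  set w' : Fin n → ℝ := fun i => if i ∈ s then w i else 0 with hw'def
  have hw'0 : ∑ i, w' i = 0 := by
    rw [show (∑ i, w' i) = ∑ i ∈ Finset.univ ∩ s, w i by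
      simp [hw'def, Finset.sum_ite_mem]]
    simpa using hw0
  have hw's : ∑ i, w' i • f i = 0 := by
    have : ∀ i : Fin n, w' i • f i = if i ∈ s then w i • f i else 0 := by
      intro i; by_cases hi : i ∈ s <;> simp [hw'def, hi]
    simp_rw [this, Finset.sum_ite_mem]
    simpa using hws
  set A : Matrix (Option (Fin n)) (Option (Fin n)) ℝ :=
    (cmMatrix G).map (Polynomial.eval t) with hA
  set c : ℝ := ∑ j, ‖f j‖ ^ 2 * w' j with hc
  set v : Option (Fin n) → ℝ := fun o => o.elim (-(c / 2)) w' with hv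
  have hvne : v ≠ 0 := by
    intro h0
    apply hwe
    have := congrFun h0 (some e)
    simpa [hv, hw'def, he] using this
  have hentry : ∀ u i : Fin n, Polynomial.eval t (cmMatrix G (some u) (some i)) =
      (‖f u‖ ^ 2 - 2 * ⟪f u, f i⟫ + ‖f i‖ ^ 2) / 2 := by
    intro u i
    have h1 := hq u i
    have h2 : dist (f u) (f i) ^ 2 = ‖f u‖ ^ 2 - 2 * ⟪f u, f i⟫ + ‖f i‖ ^ 2 := by
      rw [dist_eq_norm]
      exact norm_sub_sq_real _ _
    linarith
  have hinner : ∀ u : Fin n, ∑ i, ⟪f u, f i⟫ * w' i = 0 := by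
    intro u
    have h1 : ⟪f u, ∑ i, w' i • f i⟫ = ∑ i, w' i * ⟪f u, f i⟫ := by
      rw [inner_sum]
      exact Finset.sum_congr rfl fun i _ => real_inner_smul_right _ _ _
    rw [hw's, inner_zero_right] at h1
    rw [show (∑ i, ⟪f u, f i⟫ * w' i) = ∑ i, w' i * ⟪f u, f i⟫ by
      exact Finset.sum_congr rfl fun i _ => mul_comm _ _]
    exact h1.symm
  have hrow : ∀ u : Fin n,
      ∑ i, Polynomial.eval t (cmMatrix G (some u) (some i)) * w' i = c / 2 := by
    intro u
    simp_rw [hentry]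
    have expand : ∀ i : Fin n,
        ((‖f u‖ ^ 2 - 2 * ⟪f u, f i⟫ + ‖f i‖ ^ 2) / 2) * w' i =
          ‖f u‖ ^ 2 * w' i / 2 - ⟪f u, f i⟫ * w' i + ‖f i‖ ^ 2 * w' i / 2 := fun i => by
      ring
    simp_rw [expand]
    rw [Finset.sum_add_distrib, Finset.sum_sub_distrib, ← Finset.sum_div, ← Finset.sum_div,
      ← Finset.mul_sum, hw'0, hinner u, ← hc]
    ring
  have hAv : A.mulVec v = 0 := by
    funext j
    cases j with
    | none =>
      simp only [Matrix.mulVec, dotProduct, Pi.zero_apply]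
      rw [Fintype.sum_option]
      have h1 : A none none = 0 := by simp [hA, cmMatrix]
      have h2 : ∀ i : Fin n, A none (some i) = 1 := by intro i; simp [hA, cmMatrix]
      simp only [h1, zero_mul, zero_add]
      simp_rw [h2, one_mul]
      simpa [hv] using hw'0
    | some u =>
      simp only [Matrix.mulVec, dotProduct, Pi.zero_apply]
      rw [Fintype.sum_option]
      have h1 : A (some u) none = 1 := by simp [hA, cmMatrix]
      have h2 : ∀ i : Fin n, A (some u) (some i) * v (some i) =
          Polynomial.eval t (cmMatrix G (some u) (some i)) * w' i := by
        intro i; simp [hA, hv, Matrix.map_apply]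
      simp_rw [h2]
      rw [hrow u, h1]
      simp [hv]
  apply hdet
  rw [CG_eval_eq_det]
  convert Matrix.exists_mulVec_eq_zero_iff.mp ⟨v, hvne, hAv⟩

/-- If `x > √2` and `C_G` does not vanish on `(1, x²/2]`, then the image of
any two-distance representation of `G` in `ℝ^{n-1}` with distances `√2` and `x` affinely
spans `ℝ^{n-1}`. -/
theorem rep_affineSpan_top (n : ℕ) (G : SimpleGraph (Fin n)) (x : ℝ)
    (hx : Real.sqrt 2 < x)
    (hC : ∀ s : ℝ, 1 < s → s ≤ x ^ 2 / 2 → (CG G).eval s ≠ 0)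
    (f : Fin n → EuclideanSpace ℝ (Fin (n - 1)))
    (hf : IsTwoDistRep G f (Real.sqrt 2) x) :
    affineSpan ℝ (Set.range f) = ⊤ := by
  classical
  obtain ⟨ha, hab, hadj, hnadj⟩ := hf
  have hs2 : Real.sqrt 2 ^ 2 = 2 := Real.sq_sqrt (by norm_num)
  have hx2 : 2 < x ^ 2 := by nlinarith [Real.sqrt_nonneg 2]
  set t : ℝ := x ^ 2 / 2 with htdef
  have ht1 : 1 < t := by simp only [htdef]; linarith
  have hdet : (CG G).eval t ≠ 0 := hC t ht1 le_rfl
  rcases Nat.eq_zero_or_pos n with hn0 | hn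
  · exfalso
    apply hdet
    rw [CG_eval_eq_det]
    have hker : ∃ w : Option (Fin n) → ℝ, w ≠ 0 ∧
        ((cmMatrix G).map (Polynomial.eval t)).mulVec w = 0 := by
      refine ⟨fun _ => 1, ?_, ?_⟩
      · intro h0
        have := congrFun h0 none
        norm_num at this
      · funext j
        cases j with
        | none =>
          simp only [Matrix.mulVec, dotProduct, Pi.zero_apply]
          rw [Fintype.sum_option]
          subst hn0
          simp [cmMatrix]
        | some u =>
          subst hn0
          exact u.elim0
    obtain ⟨w, hw1, hw2⟩ := hker
    convert Matrix.exists_mulVec_eq_zero_iff.mp ⟨w, hw1, hw2⟩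
  · have hAI : AffineIndependent ℝ f := by
      apply affineIndep_of_cm_det_ne_zero n G t hdet f
      intro u v
      by_cases huv : u = v
      · subst huv; simp [cmMatrix]
      · by_cases hAdj : G.Adj u v
        · rw [hadj u v hAdj]
          simp [cmMatrix, huv, hAdj, hs2]
        · rw [hnadj u v huv hAdj]
          simp only [cmMatrix, huv, hAdj, if_false, Polynomial.eval_X]
          rw [htdef]; ring
    rw [hAI.affineSpan_eq_top_iff_card_eq_finrank_add_one]
    rw [finrank_euclideanSpace_fin]
    simp only [Fintype.card_fin]
    omega
end
end

section
/- Let G be a finite simple graph on n ≥ 2 vertices that is not the complete graph K_n, and let R be a real with √((n−1)/n) < R ≤ 1. Then there is exactly one real x > √2 satisfying both: (i) C_G(s) ≠ 0 for all s in the open interval (1, x²/2), and (ii) G admits a two-distance representation in ℝ^{n−1} with distances √2 and x whose image lies on a sphere of radius R (there is a point c with dist(c, f v) = R for every vertex v). -/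
open scoped Classical RealInnerProductSpace

noncomputable section

/-!
For vectors `b v = f v - c` on a sphere of radius `R` with distances `√2` on edges and `√(2t)`
on non-edges, the Gram matrix is `M(t) = R² J - Q(t)`, where `Q(t)` is the vertex block of the
Cayley–Menger matrix. Such a representation lives in `ℝ^{n-1}` iff `M(t)` is positive
semidefinite but not positive definite. Now `M(t) = M(1) - (t - 1) A(Gᶜ)` is affine in `t`,
`M(1) = (R² - 1) J + I` is positive definite because `R² > (n - 1)/n`, and a non-edge forces
`t ≤ 2R²` whenever `M(t) ⪰ 0`. So with `τ = criticalParam G R` the largest `t` with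
`M(t) ⪰ 0`, the matrix `M(t)` is positive definite on `[1, τ)` and singular at `τ` (positive
definiteness is an open condition), which pins down `x = √(2τ)`. Positive definiteness of `M(s)`
also excludes a kernel vector of the bordered Cayley–Menger matrix at `s`, so `C_G(s) ≠ 0` for
`1 < s < τ`.
-/

open Matrix Module

theorem exists_pos_mul_le_of_homogeneous {E : Type*} [NormedAddCommGroup E] [NormedSpace ℝ E]
    [FiniteDimensional ℝ E] {p q : E → ℝ} (hp : Continuous p) (hq : Continuous q)
    (hp_smul : ∀ (c : ℝ) x, p (c • x) = c ^ 2 * p x)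
    (hq_smul : ∀ (c : ℝ) x, q (c • x) = c ^ 2 * q x) (hq_pos : ∀ x, x ≠ 0 → 0 < q x) :
    ∃ ε > 0, ∀ x, ε * p x ≤ q x := by
  set S := Metric.sphere (0 : E) 1
  have hS0 : ∀ u ∈ S, u ≠ 0 := fun u hu h => by simp [S, h] at hu
  obtain ⟨K, hK⟩ := (isCompact_sphere (0 : E) 1).bddAbove_image
    (hp.continuousOn.div hq.continuousOn fun u hu => (hq_pos u (hS0 u hu)).ne')
  set K' := max K 0
  refine ⟨1 / (K' + 1), by positivity, fun x => ?_⟩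
  rcases eq_or_ne x 0 with rfl | hx
  · simp [by simpa using hp_smul 0 0, by simpa using hq_smul 0 0]
  set u := ‖x‖⁻¹ • x
  have hu : u ∈ S := by simp [S, u, norm_smul, hx]
  have hqu := hq_pos u (hS0 u hu)
  have hpu : p u ≤ K' * q u := by
    have := (div_le_iff₀ hqu).mp (hK ⟨u, hu, rfl⟩)
    nlinarith [le_max_left K 0]
  have hxu : x = ‖x‖ • u := by simp [u, smul_smul, hx]
  rw [hxu, hp_smul, hq_smul, div_mul_eq_mul_div, one_mul, div_le_iff₀ (by positivity)]
  have : 0 ≤ K' := le_max_right K 0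
  nlinarith [sq_nonneg ‖x‖, mul_nonneg (sq_nonneg ‖x‖) hqu.le]

theorem Matrix.PosDef.exists_pos_mul_dotProduct_mulVec_le {n : Type*} [Fintype n]
    {A : Matrix n n ℝ} (hA : A.PosDef) (B : Matrix n n ℝ) :
    ∃ ε > 0, ∀ x, ε * (x ⬝ᵥ B *ᵥ x) ≤ x ⬝ᵥ A *ᵥ x := by
  have hsmul (M : Matrix n n ℝ) (c : ℝ) (x : n → ℝ) :
      c • x ⬝ᵥ M *ᵥ (c • x) = c ^ 2 * (x ⬝ᵥ M *ᵥ x) := by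
    simp only [mulVec_smul, smul_dotProduct, dotProduct_smul, smul_eq_mul]; ring
  exact exists_pos_mul_le_of_homogeneous (by fun_prop) (by fun_prop) (hsmul B) (hsmul A)
    fun x hx => by simpa using hA.dotProduct_mulVec_pos hx

section Gram

open scoped ComplexOrder

variable {𝕜 : Type*} [RCLike 𝕜] {ι : Type*} [Fintype ι]

theorem Matrix.PosSemidef.exists_gram_eq {M : Matrix ι ι 𝕜} (hM : M.PosSemidef) :
    ∃ b : ι → EuclideanSpace 𝕜 ι, gram 𝕜 b = M := by
  open scoped MatrixOrder in
  obtain ⟨B, rfl⟩ := CStarAlgebra.nonneg_iff_eq_star_mul_self.mp hM.nonneg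
  refine ⟨fun j => WithLp.toLp 2 (fun i => B i j), ?_⟩
  rw [gram_eq_conjTranspose_mul (EuclideanSpace.basisFun ι 𝕜)]
  rfl

theorem exists_linearIsometry_of_finrank_le {E F : Type*} [NormedAddCommGroup E]
    [InnerProductSpace 𝕜 E] [FiniteDimensional 𝕜 E] [NormedAddCommGroup F]
    [InnerProductSpace 𝕜 F] [FiniteDimensional 𝕜 F] (h : finrank 𝕜 E ≤ finrank 𝕜 F) :
    Nonempty (E →ₗᵢ[𝕜] F) := by
  let e := stdOrthonormalBasis 𝕜 E
  let e' := stdOrthonormalBasis 𝕜 F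
  let f : E →ₗ[𝕜] F := e.toBasis.constr 𝕜 (e' ∘ Fin.castLE h)
  have hf : Orthonormal 𝕜 (f ∘ e.toBasis) := by
    convert e'.orthonormal.comp _ (Fin.castLE_injective h)
    ext i
    simp [f]
  exact ⟨f.isometryOfOrthonormal e.orthonormal hf⟩

theorem exists_gram_eq_of_finrank_span_le {E F : Type*} [NormedAddCommGroup E]
    [InnerProductSpace 𝕜 E] [NormedAddCommGroup F] [InnerProductSpace 𝕜 F]
    [FiniteDimensional 𝕜 F] (b : ι → E)
    (h : finrank 𝕜 (Submodule.span 𝕜 (Set.range b)) ≤ finrank 𝕜 F) :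
    ∃ b' : ι → F, gram 𝕜 b' = gram 𝕜 b := by
  have := FiniteDimensional.span_of_finite 𝕜 (Set.finite_range b)
  obtain ⟨L⟩ := exists_linearIsometry_of_finrank_le h
  refine ⟨fun i => L ⟨b i, Submodule.subset_span (Set.mem_range_self i)⟩, ?_⟩
  ext i j
  simp [gram_apply, L.inner_map_map]

theorem Matrix.PosSemidef.exists_gram_eq_of_not_posDef {M : Matrix ι ι 𝕜} (hM : M.PosSemidef)
    (hM' : ¬ M.PosDef) {d : ℕ} (hd : Fintype.card ι ≤ d + 1) :
    ∃ b : ι → EuclideanSpace 𝕜 (Fin d), gram 𝕜 b = M := by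
  obtain ⟨b, rfl⟩ := hM.exists_gram_eq
  refine exists_gram_eq_of_finrank_span_le b ?_
  have hli : ¬ LinearIndependent 𝕜 b := fun hli => hM' (posDef_gram_iff_linearIndependent.mpr hli)
  rw [linearIndependent_iff_card_eq_finrank_span] at hli
  have := finrank_range_le_card (R := 𝕜) b
  simp only [finrank_euclideanSpace_fin]
  change Set.finrank 𝕜 (Set.range b) ≤ d
  omega

end Gram

variable {V : Type*}

/-- The Gram matrix of the vectors `f v - c` of a representation of `G` on a sphere of radius
`R` around `c`, with distances `√2` on edges and `√(2t)` on non-edges. -/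
def sphereGram (G : SimpleGraph V) (R t : ℝ) : Matrix V V ℝ :=
  of fun u v => if u = v then R ^ 2 else if G.Adj u v then R ^ 2 - 1 else R ^ 2 - t

variable {G : SimpleGraph V} {R t : ℝ}

theorem isHermitian_sphereGram : (sphereGram G R t).IsHermitian := by
  ext u v
  simp only [sphereGram, conjTranspose_apply, of_apply, star_trivial, eq_comm, G.adj_comm]

theorem isTwoDistRep_iff_gram_eq_sphereGram {d : ℕ} {f : V → EuclideanSpace ℝ (Fin d)}
    {c : EuclideanSpace ℝ (Fin d)} (hf : ∀ v, dist c (f v) = R) (ht : 1 ≤ t) :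
    IsTwoDistRep G f (√2) (√(2 * t)) ↔ gram ℝ (fun v => f v - c) = sphereGram G R t := by
  have hinner (u v : V) : ⟪f u - c, f v - c⟫ = R ^ 2 - dist (f u) (f v) ^ 2 / 2 := by
    have := norm_sub_sq_real (f u - c) (f v - c)
    rw [sub_sub_sub_cancel_right, ← dist_eq_norm, ← dist_eq_norm, ← dist_eq_norm,
      dist_comm _ c, dist_comm _ c, hf, hf] at this
    linarith
  have hdist (u v : V) {a : ℝ} (ha : 0 ≤ a) : dist (f u) (f v) = √a ↔ dist (f u) (f v) ^ 2 = a :=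
    eq_comm.trans ((Real.sqrt_eq_iff_eq_sq ha dist_nonneg).trans eq_comm)
  simp only [IsTwoDistRep, Real.sqrt_pos.mpr two_pos, Real.sqrt_le_sqrt (by linarith : 2 ≤ 2 * t),
    hdist _ _ zero_le_two, hdist _ _ (by linarith : 0 ≤ 2 * t), true_and, ← Matrix.ext_iff,
    gram_apply, hinner, sphereGram, of_apply]
  constructor
  · rintro ⟨hadj, hnadj⟩ u v
    by_cases huv : u = v
    · simp [huv]
    by_cases h : G.Adj u v
    · simp [huv, h, hadj u v h]
    · simp [huv, h, hnadj u v huv h]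
  · intro h
    refine ⟨fun u v hadj => ?_, fun u v huv hnadj => ?_⟩
    · have := h u v
      simp only [G.ne_of_adj hadj, hadj, if_true, if_false, sub_right_inj] at this; linarith
    · have := h u v
      simp only [huv, hnadj, if_false, sub_right_inj] at this; linarith

theorem le_two_mul_sq_of_posSemidef_sphereGram (hG : G ≠ ⊤)
    (h : (sphereGram G R t).PosSemidef) : t ≤ 2 * R ^ 2 := by
  obtain ⟨u, v, huv, hadj⟩ := SimpleGraph.ne_top_iff_exists_not_adj.mp hG
  have := (h.submatrix ![u, v]).det_nonneg
  rw [det_fin_two] at this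
  simp only [sphereGram, submatrix_apply, cons_val_zero, cons_val_one, cons_val_fin_one, of_apply,
    if_true, if_false, huv, huv.symm, hadj, G.adj_comm] at this
  nlinarith [sq_nonneg R]

theorem bddAbove_setOf_posSemidef_sphereGram (hG : G ≠ ⊤) :
    BddAbove {t | (sphereGram G R t).PosSemidef} :=
  ⟨_, fun _ => le_two_mul_sq_of_posSemidef_sphereGram hG⟩

def criticalParam (G : SimpleGraph V) (R : ℝ) : ℝ :=
  sSup {t | (sphereGram G R t).PosSemidef}

theorem le_criticalParam (hG : G ≠ ⊤) (h : (sphereGram G R t).PosSemidef) :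
    t ≤ criticalParam G R :=
  le_csSup (bddAbove_setOf_posSemidef_sphereGram hG) h

variable [Fintype V]

theorem dotProduct_sphereGram_mulVec (x : V → ℝ) :
    x ⬝ᵥ sphereGram G R t *ᵥ x
      = x ⬝ᵥ sphereGram G R 1 *ᵥ x - (t - 1) * (x ⬝ᵥ Gᶜ.adjMatrix ℝ *ᵥ x) := by
  have : sphereGram G R t = sphereGram G R 1 - (t - 1) • Gᶜ.adjMatrix ℝ := by
    ext u v
    by_cases huv : u = v <;> by_cases hadj : G.Adj u v <;>
      simp [sphereGram, huv, hadj]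
  rw [this, sub_mulVec, dotProduct_sub, smul_mulVec, dotProduct_smul, smul_eq_mul]

theorem dotProduct_sphereGram_one_mulVec (x : V → ℝ) :
    x ⬝ᵥ sphereGram G R 1 *ᵥ x = (R ^ 2 - 1) * (∑ v, x v) ^ 2 + ∑ v, x v ^ 2 := by
  have : sphereGram G R 1 = (R ^ 2 - 1) • of (fun _ _ => (1 : ℝ)) + 1 := by
    ext u v
    by_cases huv : u = v <;> simp [sphereGram, huv, one_apply]
  rw [this, add_mulVec, smul_mulVec, one_mulVec, dotProduct_add, dotProduct_smul]
  simp only [sq, dotProduct, mulVec, of_apply, one_mul, Finset.mul_sum, smul_eq_mul, mul_left_comm,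
    Finset.sum_mul, add_left_inj]
  exact Finset.sum_comm

theorem posSemidef_sphereGram_iff :
    (sphereGram G R t).PosSemidef ↔ ∀ x, 0 ≤ x ⬝ᵥ sphereGram G R t *ᵥ x := by
  simp only [posSemidef_iff_dotProduct_mulVec, isHermitian_sphereGram, star_trivial, true_and]

theorem posDef_sphereGram_iff :
    (sphereGram G R t).PosDef ↔ ∀ x, x ≠ 0 → 0 < x ⬝ᵥ sphereGram G R t *ᵥ x := by
  simp only [posDef_iff_dotProduct_mulVec, isHermitian_sphereGram, star_trivial, true_and]

theorem posDef_sphereGram_one (hR : (Fintype.card V : ℝ) - 1 < Fintype.card V * R ^ 2) :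
    (sphereGram G R 1).PosDef := by
  refine posDef_sphereGram_iff.mpr fun x hx => ?_
  rw [dotProduct_sphereGram_one_mulVec]
  have hsum : (∑ v, x v) ^ 2 ≤ Fintype.card V * ∑ v, x v ^ 2 := sq_sum_le_card_mul_sum_sq
  have hpos : 0 < ∑ v, x v ^ 2 := by
    obtain ⟨v, hv⟩ := Function.ne_iff.mp hx
    exact Finset.sum_pos' (fun _ _ => sq_nonneg _) ⟨v, Finset.mem_univ v, pow_two_pos_of_ne_zero hv⟩
  rcases le_or_gt 1 (R ^ 2) with h | h
  · nlinarith [sq_nonneg (∑ v, x v)]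
  · nlinarith

theorem isClosed_setOf_posSemidef_sphereGram :
    IsClosed {t | (sphereGram G R t).PosSemidef} := by
  have : {t | (sphereGram G R t).PosSemidef} = ⋂ x : V → ℝ,
      {t | 0 ≤ x ⬝ᵥ sphereGram G R 1 *ᵥ x - (t - 1) * (x ⬝ᵥ Gᶜ.adjMatrix ℝ *ᵥ x)} := by
    ext t
    simp only [Set.mem_ofPred_eq, Set.mem_iInter, posSemidef_sphereGram_iff,
      dotProduct_sphereGram_mulVec (t := t)]
  rw [this]
  exact isClosed_iInter fun x => isClosed_le continuous_const (by fun_prop)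

theorem exists_posSemidef_sphereGram_add_of_posDef (h : (sphereGram G R t).PosDef) :
    ∃ ε > 0, (sphereGram G R (t + ε)).PosSemidef := by
  obtain ⟨ε, hε, hle⟩ := h.exists_pos_mul_dotProduct_mulVec_le (Gᶜ.adjMatrix ℝ)
  refine ⟨ε, hε, posSemidef_sphereGram_iff.mpr fun x => ?_⟩
  have := hle x
  rw [dotProduct_sphereGram_mulVec] at this ⊢
  linarith

theorem posSemidef_sphereGram_criticalParam (hG : G ≠ ⊤)
    (hR : (Fintype.card V : ℝ) - 1 < Fintype.card V * R ^ 2) :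
    (sphereGram G R (criticalParam G R)).PosSemidef :=
  isClosed_setOf_posSemidef_sphereGram.csSup_mem ⟨1, (posDef_sphereGram_one hR).posSemidef⟩
    (bddAbove_setOf_posSemidef_sphereGram hG)

theorem one_lt_criticalParam (hG : G ≠ ⊤)
    (hR : (Fintype.card V : ℝ) - 1 < Fintype.card V * R ^ 2) : 1 < criticalParam G R := by
  obtain ⟨ε, hε, h⟩ := exists_posSemidef_sphereGram_add_of_posDef (posDef_sphereGram_one hR)
  linarith [le_criticalParam hG h]

theorem not_posDef_sphereGram_criticalParam (hG : G ≠ ⊤) :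
    ¬ (sphereGram G R (criticalParam G R)).PosDef := fun hpd => by
  obtain ⟨ε, hε, h⟩ := exists_posSemidef_sphereGram_add_of_posDef hpd
  linarith [le_criticalParam hG h]

/-- On `[1, criticalParam G R]` the quadratic form interpolates affinely between a positive
definite and a positive semidefinite one. -/
theorem posDef_sphereGram_of_lt_criticalParam (hG : G ≠ ⊤)
    (hR : (Fintype.card V : ℝ) - 1 < Fintype.card V * R ^ 2) {s : ℝ} (hs : 1 ≤ s)
    (hs' : s < criticalParam G R) : (sphereGram G R s).PosDef := by
  refine posDef_sphereGram_iff.mpr fun x hx => ?_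
  have h₁ := posDef_sphereGram_iff.mp (posDef_sphereGram_one (G := G) hR) x hx
  have hτ := posSemidef_sphereGram_iff.mp (posSemidef_sphereGram_criticalParam hG hR) x
  rw [dotProduct_sphereGram_mulVec] at hτ ⊢
  rcases le_or_gt (x ⬝ᵥ Gᶜ.adjMatrix ℝ *ᵥ x) 0 with ha | ha
  · nlinarith
  · nlinarith

theorem posSemidef_and_not_posDef_sphereGram_iff (hG : G ≠ ⊤)
    (hR : (Fintype.card V : ℝ) - 1 < Fintype.card V * R ^ 2) (ht : 1 ≤ t) :
    ((sphereGram G R t).PosSemidef ∧ ¬ (sphereGram G R t).PosDef) ↔ t = criticalParam G R := by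
  refine ⟨fun ⟨hpsd, hnpd⟩ => ?_, fun h => h ▸ ⟨posSemidef_sphereGram_criticalParam hG hR,
    not_posDef_sphereGram_criticalParam hG⟩⟩
  refine (le_criticalParam hG hpsd).antisymm (not_lt.mp fun hlt => hnpd ?_)
  exact posDef_sphereGram_of_lt_criticalParam hG hR ht hlt

theorem eval_cmMatrix_some (s : ℝ) (u v : V) :
    (cmMatrix G (some u) (some v)).eval s = R ^ 2 - sphereGram G R s u v := by
  by_cases huv : u = v <;> by_cases hadj : G.Adj u v <;> simp [cmMatrix, sphereGram, huv, hadj]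

/-- A kernel vector `(a, y)` of the bordered matrix has `∑ y = 0` and `sphereGram G R s *ᵥ y`
constant equal to `a`, so `y` is isotropic for `sphereGram G R s`. -/
theorem eval_CG_ne_zero_of_posDef [Nonempty V] {s : ℝ} (h : (sphereGram G R s).PosDef) :
    (CG G).eval s ≠ 0 := by
  intro h0
  have hdet : ((cmMatrix G).map (Polynomial.eval s)).det = 0 := by
    rw [← h0, CG, ← Polynomial.coe_evalRingHom, RingHom.map_det, RingHom.mapMatrix_apply]
  obtain ⟨w, hw, hker⟩ := exists_mulVec_eq_zero_iff.mpr hdet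
  set y : V → ℝ := fun v => w (some v)
  have hsum : ∑ v, y v = 0 := by
    simpa [mulVec, dotProduct, cmMatrix, Fintype.sum_option] using congrFun hker none
  have hMy : sphereGram G R s *ᵥ y = fun _ => w none := by
    ext u
    have := congrFun hker (some u)
    simp only [mulVec, dotProduct, Fintype.sum_option, map_apply, eval_cmMatrix_some (R := R),
      Pi.zero_apply] at this
    simp only [cmMatrix, Polynomial.eval_one, one_mul, sub_mul, Finset.sum_sub_distrib,
      ← Finset.mul_sum] at this
    rw [show ∑ v, w (some v) = 0 from hsum, mul_zero, zero_sub] at this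
    simp only [mulVec, dotProduct]
    linarith
  have hy : y = 0 := by
    by_contra hy
    have := posDef_sphereGram_iff.mp h y hy
    rw [hMy, dotProduct_comm] at this
    simp [dotProduct, ← Finset.mul_sum, hsum] at this
  have ha : w none = 0 := by
    have := congrFun hMy (Classical.arbitrary V)
    simpa [hy] using this.symm
  exact hw (funext fun i => i.casesOn ha (congrFun hy))

theorem exists_isTwoDistRep_on_sphere_iff {d : ℕ} (hd : Fintype.card V = d + 1) (hR : 0 ≤ R)
    (ht : 1 ≤ t) :
    (∃ (f : V → EuclideanSpace ℝ (Fin d)) (c : EuclideanSpace ℝ (Fin d)),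
        IsTwoDistRep G f (√2) (√(2 * t)) ∧ ∀ v, dist c (f v) = R) ↔
      (sphereGram G R t).PosSemidef ∧ ¬ (sphereGram G R t).PosDef := by
  constructor
  · rintro ⟨f, c, hrep, hf⟩
    rw [isTwoDistRep_iff_gram_eq_sphereGram hf ht] at hrep
    refine hrep ▸ ⟨posSemidef_gram ℝ _, fun hpd => ?_⟩
    have := (posDef_gram_iff_linearIndependent.mp hpd).fintype_card_le_finrank
    simp only [finrank_euclideanSpace_fin] at this
    omega
  · rintro ⟨hpsd, hnpd⟩
    obtain ⟨b, hb⟩ := hpsd.exists_gram_eq_of_not_posDef hnpd hd.le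
    have hnorm (v : V) : dist 0 (b v) = R := by
      have := congrFun₂ hb v v
      simp only [gram_apply, real_inner_self_eq_norm_sq, sphereGram, of_apply, if_true] at this
      rw [dist_zero_left]
      exact (pow_left_inj₀ (norm_nonneg _) hR two_ne_zero).mp this
    refine ⟨b, 0, (isTwoDistRep_iff_gram_eq_sphereGram hnorm ht).mpr ?_, hnorm⟩
    simpa using hb

theorem exists_unique_rep_on_sphere_general (n : ℕ) (G : SimpleGraph (Fin n))
    (hG : G ≠ ⊤) (R : ℝ)
    (hR1 : Real.sqrt (((n : ℝ) - 1) / n) < R) :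
    ∃! x : ℝ, Real.sqrt 2 < x ∧
      (∀ s : ℝ, 1 < s → s < x ^ 2 / 2 → (CG G).eval s ≠ 0) ∧
      ∃ (f : Fin n → EuclideanSpace ℝ (Fin (n - 1)))
        (c : EuclideanSpace ℝ (Fin (n - 1))),
        IsTwoDistRep G f (Real.sqrt 2) x ∧ ∀ v, dist c (f v) = R := by
  obtain ⟨u, -⟩ := SimpleGraph.ne_top_iff_exists_not_adj.mp hG
  have : Nonempty (Fin n) := ⟨u⟩
  have hd : Fintype.card (Fin n) = n - 1 + 1 := by simp [Nat.sub_add_cancel u.pos]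
  have hR0 : 0 < R := (Real.sqrt_nonneg _).trans_lt hR1
  have hR : (Fintype.card (Fin n) : ℝ) - 1 < Fintype.card (Fin n) * R ^ 2 := by
    have := (Real.sqrt_lt' hR0).mp hR1
    rw [div_lt_iff₀ (by exact_mod_cast u.pos)] at this
    simpa [mul_comm] using this
  have hτ := one_lt_criticalParam hG hR
  have hsq (x : ℝ) (hx : 0 ≤ x) : x = √(2 * (x ^ 2 / 2)) := by
    rw [mul_div_cancel₀ _ two_ne_zero, Real.sqrt_sq hx]
  refine ⟨√(2 * criticalParam G R), ⟨Real.sqrt_lt_sqrt zero_le_two (by linarith), ?_, ?_⟩, ?_⟩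
  · intro s hs hs'
    rw [Real.sq_sqrt (by linarith), mul_div_cancel_left₀ _ two_ne_zero] at hs'
    exact eval_CG_ne_zero_of_posDef (posDef_sphereGram_of_lt_criticalParam hG hR hs.le hs')
  · exact (exists_isTwoDistRep_on_sphere_iff hd hR0.le hτ.le).mpr
      ((posSemidef_and_not_posDef_sphereGram_iff hG hR hτ.le).mpr rfl)
  · rintro x ⟨hx, -, hrep⟩
    have hx0 : 0 ≤ x := (Real.sqrt_nonneg 2).trans hx.le
    have ht : 1 ≤ x ^ 2 / 2 := by nlinarith [Real.sq_sqrt zero_le_two, Real.sqrt_nonneg 2]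
    rw [hsq x hx0, exists_isTwoDistRep_on_sphere_iff hd hR0.le ht,
      posSemidef_and_not_posDef_sphereGram_iff hG hR ht] at hrep
    rw [hsq x hx0, hrep]

/-- For a non-complete graph `G` on `n ≥ 2` vertices and
`√((n-1)/n) < R ≤ 1`, there is exactly one `x > √2` with `C_G ≠ 0` on `(1, x²/2)` such that
`G` has a two-distance representation in `ℝ^{n-1}` with distances `√2` and `x` lying on a
sphere of radius `R`. -/
theorem exists_unique_rep_on_sphere (n : ℕ) (hn : 2 ≤ n) (G : SimpleGraph (Fin n))
    (hG : G ≠ ⊤) (R : ℝ)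
    (hR1 : Real.sqrt (((n : ℝ) - 1) / n) < R) (hR2 : R ≤ 1) :
    ∃! x : ℝ, Real.sqrt 2 < x ∧
      (∀ s : ℝ, 1 < s → s < x ^ 2 / 2 → (CG G).eval s ≠ 0) ∧
      ∃ (f : Fin n → EuclideanSpace ℝ (Fin (n - 1)))
        (c : EuclideanSpace ℝ (Fin (n - 1))),
        IsTwoDistRep G f (Real.sqrt 2) x ∧ ∀ v, dist c (f v) = R :=
  exists_unique_rep_on_sphere_general n G hG R hR1
end
end

section
/- Let G be a finite simple graph on n ≥ 2 vertices that is not the complete graph K_n. Then there is exactly one real b > √2 satisfying both: (i) C_G(s) ≠ 0 for all s in the open interval (1, b²/2), and (ii) G admits a two-distance representation in ℝ^{n−1} with distances √2 and b whose image lies on the unit sphere centered at the origin of ℝ^{n−1}. (Thus every non-complete graph has a J-spherical representation, and it is unique.) -/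
open scoped Classical RealInnerProductSpace

noncomputable section

/-!
For `t ≥ 1` let `Q(t) = I - (t - 1) Ā`, where `Ā` is the adjacency matrix of the complement
of `G`. Unit vectors at distance `√2` on edges and `b` on non-edges are exactly vectors with
Gram matrix `Q(b² / 2)`, and `n` such vectors fit into `ℝ^{n-1}` iff `Q(b² / 2)` is positive
semidefinite and singular. As `Q(s)` is a convex combination of `I` and `Q(t)` for `1 ≤ s ≤ t`,
it is positive definite for `1 ≤ s < t` as soon as `Q(t)` is positive semidefinite; so at most
one `t ≥ 1` makes `Q(t)` positive semidefinite and singular, and `t = 1 + 1 / λ_max(Ā)` does.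
On `(1, t)` the value `C_G(s)` is the determinant of `J - Q(s)` bordered by ones, which has
trivial kernel because `Q(s)` is positive definite.
-/

open Matrix

namespace Matrix

variable {V : Type*} [Fintype V]

def bordered {R : Type*} [Zero R] [One R] (M : Matrix V V R) : Matrix (Option V) (Option V) R
  | none, none => 0
  | none, some _ => 1
  | some _, none => 1
  | some u, some v => M u v

theorem det_bordered_ne_zero [Nonempty V] {Q : Matrix V V ℝ} (hQ : Q.PosDef) :
    (bordered (of 1 - Q)).det ≠ 0 := by
  intro hdet
  obtain ⟨w, hw0, hw⟩ := exists_mulVec_eq_zero_iff.mpr hdet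
  have hsum : ∑ u, w (some u) = 0 := by
    simpa [mulVec, dotProduct, Fintype.sum_option, bordered] using congrFun hw none
  have hQw : Q *ᵥ (w ∘ some) = fun _ => w none := by
    ext u
    have := congrFun hw (some u)
    simp only [mulVec, dotProduct, Fintype.sum_option, bordered, Matrix.sub_apply, of_apply,
      Pi.one_apply, sub_mul, one_mul, Finset.sum_sub_distrib, hsum, Pi.zero_apply] at this
    simp only [mulVec, dotProduct, Function.comp_apply]
    linarith
  have hw_some : w ∘ some = 0 := by
    by_contra hne
    have := hQ.dotProduct_mulVec_pos hne
    simp [hQw, dotProduct, ← Finset.sum_mul, hsum] at this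
  apply hw0
  ext (_ | u)
  · obtain ⟨u⟩ := ‹Nonempty V›
    simpa [hw_some] using (congrFun hQw u).symm
  · exact congrFun hw_some u

variable [DecidableEq V]

theorem det_gram_eq_zero_of_finrank_lt {E : Type*} [NormedAddCommGroup E]
    [InnerProductSpace ℝ E] [FiniteDimensional ℝ E] {v : V → E}
    (hv : Module.finrank ℝ E < Fintype.card V) : (gram ℝ v).det = 0 := by
  by_contra h
  exact hv.not_ge (linearIndependent_of_det_gram_ne_zero h).fintype_card_le_finrank

namespace IsHermitian

variable {A : Matrix V V ℝ} (hA : A.IsHermitian)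
include hA

theorem apply_eq_sum_eigenvalues (i j : V) :
    A i j = ∑ k, hA.eigenvectorBasis k i * hA.eigenvalues k * hA.eigenvectorBasis k j := by
  conv_lhs => rw [hA.spectral_theorem, Unitary.conjStarAlgAut_apply]
  simp [mul_apply, diagonal_apply]

theorem exists_eigenvalues_pos (htr : A.trace = 0) (hA0 : A ≠ 0) :
    ∃ i, 0 < hA.eigenvalues i := by
  by_contra! hle
  have hsum : ∑ i, hA.eigenvalues i = 0 := by
    simpa [htr] using hA.trace_eq_sum_eigenvalues.symm
  refine hA0 (hA.eigenvalues_eq_zero_iff.mp (funext fun i => ?_))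
  exact (Finset.sum_eq_zero_iff_of_nonpos fun j _ => hle j).mp hsum i (Finset.mem_univ i)

theorem posSemidef_one_sub_smul {c : ℝ} (hc : ∀ i, c * hA.eigenvalues i ≤ 1) :
    (1 - c • A).PosSemidef := by
  set U : Matrix V V ℝ := (hA.eigenvectorUnitary : Matrix V V ℝ)
  have hU : U * star U = 1 := Unitary.coe_mul_star_self _
  have hA' : A = U * diagonal hA.eigenvalues * star U := by
    conv_lhs => rw [hA.spectral_theorem, Unitary.conjStarAlgAut_apply]
    simp [U]
  have hdiag : (diagonal fun i => 1 - c * hA.eigenvalues i).PosSemidef :=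
    PosSemidef.diagonal fun i => sub_nonneg.mpr (hc i)
  convert hdiag.mul_mul_conjTranspose_same U using 1
  have hdiag_eq :
      diagonal (fun i => 1 - c * hA.eigenvalues i) = 1 - c • diagonal hA.eigenvalues := by
    ext i j
    by_cases h : i = j <;> simp [diagonal, h]
  conv_lhs => rw [hA']
  rw [← star_eq_conjTranspose, hdiag_eq, mul_sub, sub_mul, mul_one, hU]
  simp

theorem det_one_sub_inv_smul_eq_zero (i : V) (hi : hA.eigenvalues i ≠ 0) :
    (1 - (hA.eigenvalues i)⁻¹ • A).det = 0 := by
  refine exists_mulVec_eq_zero_iff.mp ⟨hA.eigenvectorBasis i, ?_, ?_⟩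
  · exact (WithLp.ofLp_eq_zero 2).ne.mpr (hA.eigenvectorBasis.orthonormal.ne_zero i)
  · rw [sub_mulVec, smul_mulVec, hA.mulVec_eigenvectorBasis, smul_smul, inv_mul_cancel₀ hi,
      one_smul, one_mulVec, sub_self]

end IsHermitian

/-- The vectors are the rows of `U √D` for a spectral decomposition `Q = U D Uᵀ`, with the
coordinate of a zero eigenvalue dropped. -/
theorem PosSemidef.exists_gram_of_det_eq_zero {Q : Matrix V V ℝ} (hQ : Q.PosSemidef)
    (hdet : Q.det = 0) :
    ∃ f : V → EuclideanSpace ℝ (Fin (Fintype.card V - 1)), gram ℝ f = Q := by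
  have hA := hQ.isHermitian
  obtain ⟨i₀, -, hi₀⟩ : ∃ i₀ ∈ Finset.univ, hA.eigenvalues i₀ = 0 := by
    simpa [hA.det_eq_prod_eigenvalues, Finset.prod_eq_zero_iff] using hdet
  let g (i : V) : EuclideanSpace ℝ {k // k ≠ i₀} :=
    WithLp.toLp 2 fun k => hA.eigenvectorBasis k i * Real.sqrt (hA.eigenvalues k)
  have hg : gram ℝ g = Q := by
    ext i j
    have hzero : ∑ k : {k // ¬k ≠ i₀},
        hA.eigenvectorBasis k i * hA.eigenvalues k * hA.eigenvectorBasis k j = 0 :=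
      Fintype.sum_eq_zero _ fun k => by simp [not_not.mp k.2, hi₀]
    rw [gram_apply, hA.apply_eq_sum_eigenvalues,
      ← Fintype.sum_subtype_add_sum_subtype (· ≠ i₀), hzero, add_zero, PiLp.inner_apply]
    refine Fintype.sum_congr _ _ fun k => ?_
    have := Real.mul_self_sqrt (hQ.eigenvalues_nonneg k)
    simp only [g, RCLike.inner_apply, conj_trivial]
    linear_combination (hA.eigenvectorBasis k i * hA.eigenvectorBasis k j) * this
  let e : {k // k ≠ i₀} ≃ Fin (Fintype.card V - 1) := Fintype.equivFinOfCardEq (by simp)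
  refine ⟨fun i => LinearIsometryEquiv.piLpCongrLeft 2 ℝ ℝ e (g i), ?_⟩
  ext i j
  rw [gram_apply, LinearIsometryEquiv.inner_map_map, ← gram_apply, hg]

end Matrix

theorem dist_sq_eq_two_sub_two_inner {E : Type*} [NormedAddCommGroup E] [InnerProductSpace ℝ E]
    {x y : E} (hx : ‖x‖ = 1) (hy : ‖y‖ = 1) : dist x y ^ 2 = 2 - 2 * ⟪x, y⟫ := by
  rw [dist_eq_norm, norm_sub_sq_real, hx, hy]
  ring

namespace SimpleGraph

variable {V : Type*} (G : SimpleGraph V)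

/-- For `t = b² / 2`, the Gram matrix of a representation of `G` on the unit sphere with
distances `√2` and `b`. -/
def jGram (t : ℝ) : Matrix V V ℝ :=
  1 - (t - 1) • Gᶜ.adjMatrix ℝ

theorem jGram_apply (t : ℝ) (u v : V) :
    G.jGram t u v = if u = v then 1 else if G.Adj u v then 0 else 1 - t := by
  by_cases huv : u = v
  · simp [jGram, huv]
  · by_cases hadj : G.Adj u v <;> simp [jGram, one_apply, huv, hadj]

theorem posDef_jGram_of_lt {s t : ℝ} (hs : 1 ≤ s) (hst : s < t)
    (ht : (G.jGram t).PosSemidef) : (G.jGram s).PosDef := by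
  set θ := (s - 1) / (t - 1)
  have hθ0 : 0 ≤ θ := div_nonneg (by linarith) (by linarith)
  have hθ1 : θ < 1 := (div_lt_one (by linarith)).mpr (by linarith)
  have hcomb : G.jGram s = (1 - θ) • (1 : Matrix V V ℝ) + θ • G.jGram t := by
    have : θ * (t - 1) = s - 1 := div_mul_cancel₀ _ (by linarith)
    simp only [jGram, smul_sub, smul_smul, this]
    module
  rw [hcomb]
  exact (PosDef.one.smul (sub_pos.mpr hθ1)).add_posSemidef (ht.smul hθ0)

variable [Fintype V]

theorem eq_of_jGram_posSemidef_of_det_eq_zero {s t : ℝ} (hs : 1 ≤ s) (ht : 1 ≤ t)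
    (hsP : (G.jGram s).PosSemidef) (hs0 : (G.jGram s).det = 0)
    (htP : (G.jGram t).PosSemidef) (ht0 : (G.jGram t).det = 0) : s = t := by
  rcases lt_trichotomy s t with hst | hst | hst
  · exact absurd hs0 (G.posDef_jGram_of_lt hs hst htP).det_pos.ne'
  · exact hst
  · exact absurd ht0 (G.posDef_jGram_of_lt ht hst hsP).det_pos.ne'

theorem exists_jGram_posSemidef_det_eq_zero (hG : G ≠ ⊤) :
    ∃ t, 1 < t ∧ (G.jGram t).PosSemidef ∧ (G.jGram t).det = 0 := by
  have hA := Gᶜ.isHermitian_adjMatrix ℝ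
  have hA0 : Gᶜ.adjMatrix ℝ ≠ 0 := by
    obtain ⟨u, v, huv, hadj⟩ := ne_top_iff_exists_not_adj.mp hG
    exact fun h => by simpa [huv, hadj] using congrFun₂ h u v
  obtain ⟨j, hj⟩ := hA.exists_eigenvalues_pos (Gᶜ.trace_adjMatrix ℝ) hA0
  have : Nonempty V := ⟨j⟩
  obtain ⟨i, hmax⟩ := Finite.exists_max hA.eigenvalues
  have hi : 0 < hA.eigenvalues i := hj.trans_le (hmax j)
  refine ⟨1 + (hA.eigenvalues i)⁻¹, by simpa using hi, ?_⟩
  rw [jGram, add_sub_cancel_left]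
  refine ⟨hA.posSemidef_one_sub_smul fun k => ?_, hA.det_one_sub_inv_smul_eq_zero i hi.ne'⟩
  rw [inv_mul_le_one₀ hi]
  exact hmax k

theorem eval_CG (s : ℝ) : (CG G).eval s = (bordered (of 1 - G.jGram s)).det := by
  rw [CG, ← Polynomial.coe_evalRingHom, RingHom.map_det]
  congr 1
  ext (_ | u) (_ | v) <;>
    simp [bordered, cmMatrix, jGram_apply, apply_ite (Polynomial.eval s), sub_ite]

end SimpleGraph

namespace IsTwoDistRep

variable {V : Type*} {G : SimpleGraph V} {d : ℕ} {f : V → EuclideanSpace ℝ (Fin d)} {b : ℝ}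

theorem gram_eq_jGram (hf : IsTwoDistRep G f (Real.sqrt 2) b) (hunit : ∀ v, ‖f v‖ = 1) :
    gram ℝ f = G.jGram (b ^ 2 / 2) := by
  ext u v
  have key := dist_sq_eq_two_sub_two_inner (hunit u) (hunit v)
  rw [gram_apply, SimpleGraph.jGram_apply]
  split_ifs with huv hadj
  · subst huv
    rw [real_inner_self_eq_norm_sq, hunit, one_pow]
  · rw [hf.2.2.1 u v hadj, Real.sq_sqrt zero_le_two] at key
    linarith
  · rw [hf.2.2.2 u v huv hadj] at key
    linarith

theorem jGram_posSemidef_and_det_eq_zero [Fintype V] (hd : d < Fintype.card V)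
    (hf : IsTwoDistRep G f (Real.sqrt 2) b) (hunit : ∀ v, ‖f v‖ = 1) :
    (G.jGram (b ^ 2 / 2)).PosSemidef ∧ (G.jGram (b ^ 2 / 2)).det = 0 := by
  rw [← hf.gram_eq_jGram hunit]
  exact ⟨posSemidef_gram ℝ f, det_gram_eq_zero_of_finrank_lt (by simpa using hd)⟩

end IsTwoDistRep

theorem isTwoDistRep_of_gram_eq_jGram {V : Type*} {G : SimpleGraph V} {d : ℕ}
    {f : V → EuclideanSpace ℝ (Fin d)} {t : ℝ} (ht : 1 ≤ t) (hf : gram ℝ f = G.jGram t) :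
    IsTwoDistRep G f (Real.sqrt 2) (Real.sqrt (2 * t)) ∧ ∀ v, ‖f v‖ = 1 := by
  have hinner (u v : V) : ⟪f u, f v⟫ = G.jGram t u v := by rw [← gram_apply, hf]
  have hunit (v : V) : ‖f v‖ = 1 := by
    have := hinner v v
    rw [real_inner_self_eq_norm_sq, SimpleGraph.jGram_apply, if_pos rfl] at this
    exact (pow_eq_one_iff_of_nonneg (norm_nonneg _) two_ne_zero).mp this
  have hdist (u v : V) : dist (f u) (f v) = Real.sqrt (2 - 2 * G.jGram t u v) := by
    rw [← hinner, ← dist_sq_eq_two_sub_two_inner (hunit u) (hunit v), Real.sqrt_sq dist_nonneg]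
  refine ⟨⟨by positivity, Real.sqrt_le_sqrt (by linarith), fun u v hadj => ?_,
    fun u v huv hadj => ?_⟩, hunit⟩
  · rw [hdist, SimpleGraph.jGram_apply, if_neg hadj.ne, if_pos hadj]
    norm_num
  · rw [hdist, SimpleGraph.jGram_apply, if_neg huv, if_neg hadj]
    ring_nf

theorem exists_isTwoDistRep_of_jGram {V : Type*} [Fintype V] {G : SimpleGraph V} {t : ℝ}
    (ht : 1 ≤ t) (hP : (G.jGram t).PosSemidef) (h0 : (G.jGram t).det = 0) :
    ∃ f : V → EuclideanSpace ℝ (Fin (Fintype.card V - 1)),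
      IsTwoDistRep G f (Real.sqrt 2) (Real.sqrt (2 * t)) ∧ ∀ v, ‖f v‖ = 1 := by
  obtain ⟨f, hf⟩ := hP.exists_gram_of_det_eq_zero h0
  exact ⟨f, isTwoDistRep_of_gram_eq_jGram ht hf⟩

theorem exists_unique_J_spherical_general (n : ℕ) (G : SimpleGraph (Fin n))
    (hG : G ≠ ⊤) :
    ∃! b : ℝ, Real.sqrt 2 < b ∧
      (∀ s : ℝ, 1 < s → s < b ^ 2 / 2 → (CG G).eval s ≠ 0) ∧
      ∃ f : Fin n → EuclideanSpace ℝ (Fin (n - 1)),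
        IsTwoDistRep G f (Real.sqrt 2) b ∧ ∀ v, ‖f v‖ = 1 := by
  obtain ⟨u, -, -, -⟩ := SimpleGraph.ne_top_iff_exists_not_adj.mp hG
  have : Nonempty (Fin n) := ⟨u⟩
  obtain ⟨t, ht1, htP, ht0⟩ := G.exists_jGram_posSemidef_det_eq_zero hG
  have hbt : Real.sqrt (2 * t) ^ 2 / 2 = t := by
    rw [Real.sq_sqrt (by linarith)]
    ring
  refine ⟨Real.sqrt (2 * t), ⟨Real.sqrt_lt_sqrt zero_le_two (by linarith),
    fun s hs1 hs2 => ?_, ?_⟩, ?_⟩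
  · rw [G.eval_CG]
    exact det_bordered_ne_zero (G.posDef_jGram_of_lt hs1.le (hbt ▸ hs2) htP)
  · have := exists_isTwoDistRep_of_jGram ht1.le htP ht0
    rwa [Fintype.card_fin] at this
  · rintro b ⟨hb, -, f, hf, hunit⟩
    have hb0 : 0 < b := (Real.sqrt_nonneg 2).trans_lt hb
    have hb1 : 1 ≤ b ^ 2 / 2 := by
      have := (Real.sqrt_lt' hb0).mp hb
      linarith
    obtain ⟨hP, h0⟩ := hf.jGram_posSemidef_and_det_eq_zero
      (by rw [Fintype.card_fin]; exact Nat.sub_lt u.pos one_pos) hunit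
    rw [← G.eq_of_jGram_posSemidef_of_det_eq_zero hb1 ht1.le hP h0 htP ht0,
      mul_div_cancel₀ _ two_ne_zero, Real.sqrt_sq hb0.le]

/-- Every non-complete graph on `n ≥ 2` vertices has a unique J-spherical
representation: there is exactly one `b > √2` with `C_G ≠ 0` on `(1, b²/2)` such that `G`
has a two-distance representation in `ℝ^{n-1}` with distances `√2` and `b` lying on the unit
sphere centered at the origin. -/
theorem exists_unique_J_spherical (n : ℕ) (hn : 2 ≤ n) (G : SimpleGraph (Fin n))
    (hG : G ≠ ⊤) :
    ∃! b : ℝ, Real.sqrt 2 < b ∧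
      (∀ s : ℝ, 1 < s → s < b ^ 2 / 2 → (CG G).eval s ≠ 0) ∧
      ∃ f : Fin n → EuclideanSpace ℝ (Fin (n - 1)),
        IsTwoDistRep G f (Real.sqrt 2) b ∧ ∀ v, ‖f v‖ = 1 :=
  exists_unique_J_spherical_general n G hG
end
end

section
/- Let S be a finite set of points on the unit sphere of ℝ^d centered at the origin with |S| ≥ d + 1, such that any two distinct points of S are at distance at least √2. If the origin lies on the boundary of the convex hull of S (the origin belongs to the convex hull but not to its interior), then S is join-decomposable: there exist nonempty disjoint sets S₁ and S₂ with S = S₁ ∪ S₂ and a linear subspace L of ℝ^d with S₁ ⊆ L and S₂ ⊆ L^⊥ (the orthogonal complement of L). -/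
open scoped Classical RealInnerProductSpace

noncomputable section

/-!
Unit vectors at mutual distance at least `√2` have pairwise non-positive inner products.
By Carathéodory, `0 = ∑ p ∈ P, w p • p` with positive weights on some `P ⊆ S` contained in an
affinely independent subset of `S`. If `P ≠ S`, pairing this relation with `q ∈ S \ P` gives a
vanishing sum of non-positive terms `w p * ⟪p, q⟫`, so `P ⟂ S \ P`. If `P = S`, then `S` is an
affinely independent set of `d + 1` points, i.e. a `d`-simplex, and `0` has positive barycentric
coordinates in it, so it lies in the interior of the hull.
-/

section InnerProductSpace

variable {E : Type*} [NormedAddCommGroup E] [InnerProductSpace ℝ E]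

def JoinDecomposable [DecidableEq E] (S : Finset E) : Prop :=
  ∃ S₁ S₂ : Finset E, S₁.Nonempty ∧ S₂.Nonempty ∧ Disjoint S₁ S₂ ∧ S = S₁ ∪ S₂ ∧
    ∃ L : Submodule ℝ E, (S₁ : Set E) ⊆ L ∧ (S₂ : Set E) ⊆ Lᗮ

theorem inner_nonpos_of_sqrt_two_le_dist_s12 {p q : E} (hp : ‖p‖ = 1) (hq : ‖q‖ = 1)
    (h : √2 ≤ dist p q) : ⟪p, q⟫ ≤ 0 := by
  have h2 : √2 ^ 2 ≤ dist p q ^ 2 := pow_le_pow_left₀ (Real.sqrt_nonneg 2) h 2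
  rw [Real.sq_sqrt zero_le_two, dist_eq_norm, norm_sub_sq_real, hp, hq] at h2
  linarith

theorem inner_eq_zero_of_sum_smul_eq_zero {P : Finset E} {w : E → ℝ} (hw : ∀ p ∈ P, 0 < w p)
    (hsum : ∑ p ∈ P, w p • p = 0) {q : E} (hq : ∀ p ∈ P, ⟪p, q⟫ ≤ 0) {p : E} (hp : p ∈ P) :
    ⟪p, q⟫ = 0 := by
  have hterms : ∑ p ∈ P, w p * ⟪p, q⟫ = 0 := by
    simpa only [sum_inner, real_inner_smul_left, inner_zero_left] using congrArg (⟪·, q⟫) hsum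
  have hnonpos : ∀ p ∈ P, w p * ⟪p, q⟫ ≤ 0 := fun p hp =>
    mul_nonpos_of_nonneg_of_nonpos (hw p hp).le (hq p hp)
  exact (mul_eq_zero.mp ((Finset.sum_eq_zero_iff_of_nonpos hnonpos).mp hterms p hp)).resolve_left
    (hw p hp).ne'

theorem joinDecomposable_of_sum_smul_eq_zero [DecidableEq E] {S P : Finset E}
    (hS : ∀ p ∈ S, ∀ q ∈ S, p ≠ q → ⟪p, q⟫ ≤ 0) (hPS : P ⊆ S) (hP : P.Nonempty) (hPne : P ≠ S)
    {w : E → ℝ} (hw : ∀ p ∈ P, 0 < w p) (hsum : ∑ p ∈ P, w p • p = 0) : JoinDecomposable S := by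
  have horth : Submodule.span ℝ (↑(S \ P) : Set E) ≤ (Submodule.span ℝ (P : Set E))ᗮ := by
    refine (Submodule.isOrtho_span.mpr fun p hp q hq => ?_).ge
    obtain ⟨hqS, hqP⟩ := Finset.mem_sdiff.mp hq
    exact inner_eq_zero_of_sum_smul_eq_zero hw hsum
      (fun p' hp' => hS p' (hPS hp') q hqS (ne_of_mem_of_not_mem hp' hqP)) hp
  exact ⟨P, S \ P, hP, Finset.sdiff_nonempty.mpr fun h => hPne (hPS.antisymm h),
    Finset.disjoint_sdiff, (Finset.union_sdiff_of_subset hPS).symm, Submodule.span ℝ P,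
    Submodule.subset_span, fun q hq => horth (Submodule.subset_span hq)⟩

end InnerProductSpace

theorem Finset.exists_pos_weights_of_mem_convexHull {E : Type*} [AddCommGroup E] [Module ℝ E]
    {s : Finset E} {x : E} (hx : x ∈ convexHull ℝ (s : Set E)) :
    ∃ t ⊆ s, ∃ w : E → ℝ, (∀ p ∈ t, 0 < w p) ∧ ∑ p ∈ t, w p = 1 ∧ ∑ p ∈ t, w p • p = x := by
  obtain ⟨w, hw0, hw1, hwx⟩ := Finset.mem_convexHull'.mp hx
  have hpos : ∀ p ∈ s, w p ≠ 0 → 0 < w p := fun p hp hne => (hw0 p hp).lt_of_ne' hne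
  refine ⟨s.filter (0 < w ·), Finset.filter_subset _ _, w, fun p hp => (Finset.mem_filter.mp hp).2,
    ?_, ?_⟩
  · rwa [Finset.sum_filter_of_ne hpos]
  · rwa [Finset.sum_filter_of_ne fun p hp hne => hpos p hp (left_ne_zero_of_smul hne)]

theorem AffineIndependent.affineSpan_eq_top_of_finrank_add_one_le {k V P ι : Type*}
    [DivisionRing k] [AddCommGroup V] [Module k V] [AddTorsor V P] [FiniteDimensional k V]
    [Fintype ι] {p : ι → P} (hp : AffineIndependent k p)
    (hcard : Module.finrank k V + 1 ≤ Fintype.card ι) : affineSpan k (Set.range p) = ⊤ :=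
  hp.affineSpan_eq_top_iff_card_eq_finrank_add_one.mpr <|
    (hp.card_le_finrank_succ.trans (Nat.succ_le_succ (Submodule.finrank_le _))).antisymm hcard

theorem AffineIndependent.sum_smul_mem_interior_convexHull {E : Type*} [NormedAddCommGroup E]
    [NormedSpace ℝ E] {s : Finset E} (hind : AffineIndependent ℝ ((↑) : s → E))
    (htop : affineSpan ℝ (Set.range ((↑) : s → E)) = ⊤) {w : E → ℝ} (hw : ∀ p ∈ s, 0 < w p)
    (hw1 : ∑ p ∈ s, w p = 1) : ∑ p ∈ s, w p • p ∈ interior (convexHull ℝ (s : Set E)) := by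
  let b : AffineBasis s ℝ E := ⟨(↑), hind, htop⟩
  have hw1' : ∑ p : s, (w ∘ (↑)) p = 1 := (Finset.sum_coe_sort s w).trans hw1
  have hcomb : ∑ p ∈ s, w p • p = Finset.univ.affineCombination ℝ b (w ∘ (↑)) := by
    rw [Finset.affineCombination_eq_linear_combination _ _ _ hw1', ← Finset.sum_coe_sort s]
    rfl
  have hrange : Set.range b = s := Subtype.range_coe
  rw [← hrange, b.interior_convexHull, hcomb]
  exact fun p => (b.coord_apply_combination_of_mem (Finset.mem_univ p) hw1').symm ▸ hw p p.2

/-- If `S` lies on the unit sphere of `ℝ^d`, has at least `d + 1` points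
with pairwise distances at least `√2`, and the origin lies on the boundary of the convex
hull of `S`, then `S` is join-decomposable. -/
theorem join_decomposable_of_boundary (d : ℕ) (S : Finset (EuclideanSpace ℝ (Fin d)))
    (hsph : ∀ p ∈ S, ‖p‖ = 1) (hcard : d + 1 ≤ S.card)
    (hdist : ∀ p ∈ S, ∀ q ∈ S, p ≠ q → Real.sqrt 2 ≤ dist p q)
    (h0 : (0 : EuclideanSpace ℝ (Fin d)) ∈
      convexHull ℝ (↑S : Set (EuclideanSpace ℝ (Fin d))))
    (h0' : (0 : EuclideanSpace ℝ (Fin d)) ∉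
      interior (convexHull ℝ (↑S : Set (EuclideanSpace ℝ (Fin d))))) :
    ∃ S₁ S₂ : Finset (EuclideanSpace ℝ (Fin d)),
      S₁.Nonempty ∧ S₂.Nonempty ∧ Disjoint S₁ S₂ ∧ S = S₁ ∪ S₂ ∧
      ∃ L : Submodule ℝ (EuclideanSpace ℝ (Fin d)),
        (↑S₁ : Set (EuclideanSpace ℝ (Fin d))) ⊆ (L : Set (EuclideanSpace ℝ (Fin d))) ∧
        (↑S₂ : Set (EuclideanSpace ℝ (Fin d))) ⊆ (Lᗮ : Set (EuclideanSpace ℝ (Fin d))) := by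
  have hinner : ∀ p ∈ S, ∀ q ∈ S, p ≠ q → ⟪p, q⟫ ≤ 0 := fun p hp q hq hpq =>
    inner_nonpos_of_sqrt_two_le_dist_s12 (hsph p hp) (hsph q hq) (hdist p hp q hq hpq)
  set T := Caratheodory.minCardFinsetOfMemConvexHull h0
  have hTS : T ⊆ S := Finset.coe_subset.mp (Caratheodory.minCardFinsetOfMemConvexHull_subseteq h0)
  obtain ⟨P, hPT, w, hw, hw1, hsum⟩ :=
    Finset.exists_pos_weights_of_mem_convexHull (Caratheodory.mem_minCardFinsetOfMemConvexHull h0)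
  have hP : P.Nonempty := Finset.nonempty_of_sum_ne_zero (hw1.symm ▸ one_ne_zero)
  by_cases hPS : P = S
  · have hind : AffineIndependent ℝ ((↑) : S → EuclideanSpace ℝ (Fin d)) :=
      hTS.antisymm (hPS ▸ hPT) ▸ Caratheodory.affineIndependent_minCardFinsetOfMemConvexHull h0
    have htop := hind.affineSpan_eq_top_of_finrank_add_one_le (by simpa using hcard)
    subst hPS
    exact absurd (hsum ▸ hind.sum_smul_mem_interior_convexHull htop hw hw1) h0'
  · exact joinDecomposable_of_sum_smul_eq_zero hinner (hPT.trans hTS) hP hPS hw hsum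
end
end
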